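/- arXiv:2201.04824 — 2 statements merged into one kernel-verified Lean document; each statement's English description precedes it below -/
import Mathlib

section
/- Let U = (U^{(1)},…,U^{(k)}) be a KKT point of mLRPOTA(r) and fix 1 ≤ j ≤ r with λ_j(U) = 0. Let Û = (Û^{(1)},…,Û^{(k)}) be obtained by deleting the j-th column of every U^{(i)}. Then Û is a KKT point of mLRPOTA(r−1). More generally, if T ⊆ {1,…,r} has cardinality t < r and λ_j(U) = 0 exactly for j ∈ T, then deleting the columns indexed by T from every factor matrix yields a primitive KKT point (one with all λ_j ≠ 0) of mLRPOTA(r−t). -/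
open scoped BigOperators

namespace POT

variable {k : ℕ}

/-- The multi-index set of a `k`-way tensor of dimensions `n`. -/
abbrev Idx {k : ℕ} (n : Fin k → ℕ) : Type := (i : Fin k) → Fin (n i)

/-- A real tensor in `ℝ^{n₁} ⊗ ⋯ ⊗ ℝ^{n_k}`, represented by its entries. -/
abbrev Tensor {k : ℕ} (n : Fin k → ℕ) : Type := Idx n → ℝ

/-- A tuple of factor matrices with `r` columns: `Fac n r i j` is the `j`-th column
of the `i`-th factor matrix, as a vector in `ℝ^{n i}`. -/
abbrev Fac {k : ℕ} (n : Fin k → ℕ) (r : ℕ) : Type := (i : Fin k) → Fin r → Fin (n i) → ℝ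

/-- All columns of the matrix `U` (stored column-wise) have unit Euclidean norm. -/
def unitCols {m r : ℕ} (U : Fin r → Fin m → ℝ) : Prop :=
  ∀ j, (∑ t, U j t * U j t) = 1

/-- The columns of the matrix `U` (stored column-wise) are orthonormal. -/
def orthoCols {m r : ℕ} (U : Fin r → Fin m → ℝ) : Prop :=
  ∀ j j', (∑ t, U j t * U j' t) = if j = j' then (1 : ℝ) else 0

/-- The tensor `∑ j, σ j • a¹_j ⊗ ⋯ ⊗ aᵏ_j`. -/
def decomp {n : Fin k → ℕ} {r : ℕ} (σ : Fin r → ℝ) (a : Fac n r) : Tensor n :=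
  fun idx => ∑ j, σ j * ∏ i, a i j (idx i)

/-- Membership in `P_s(n,r)`: partially orthogonal tensors of rank at most `r`
with the first `s` factor matrices orthonormal. -/
def memP (s r : ℕ) {n : Fin k → ℕ} (A : Tensor n) : Prop :=
  ∃ (σ : Fin r → ℝ) (a : Fac n r),
    (∀ i, unitCols (a i)) ∧
    (∀ i : Fin k, (i : ℕ) < s → orthoCols (a i)) ∧
    A = decomp σ a

/-- Membership in `Q_s(n,r)`: decomposition can be chosen with factor matrices
`s+1, …, k` of full column rank. -/
def memQ (s r : ℕ) {n : Fin k → ℕ} (A : Tensor n) : Prop :=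
  ∃ (σ : Fin r → ℝ) (a : Fac n r),
    (∀ i, unitCols (a i)) ∧
    (∀ i : Fin k, (i : ℕ) < s → orthoCols (a i)) ∧
    (∀ i : Fin k, s ≤ (i : ℕ) → LinearIndependent ℝ (a i)) ∧
    A = decomp σ a

/-- Membership in `R_s(n,r)`: as `Q_s(n,r)` but with all coefficients nonzero. -/
def memR (s r : ℕ) {n : Fin k → ℕ} (A : Tensor n) : Prop :=
  ∃ (σ : Fin r → ℝ) (a : Fac n r),
    (∀ j, σ j ≠ 0) ∧
    (∀ i, unitCols (a i)) ∧
    (∀ i : Fin k, (i : ℕ) < s → orthoCols (a i)) ∧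
    (∀ i : Fin k, s ≤ (i : ℕ) → LinearIndependent ℝ (a i)) ∧
    A = decomp σ a

/-- The (CP) rank of a tensor: the least number of rank-one summands. -/
noncomputable def trank {n : Fin k → ℕ} (A : Tensor n) : ℕ :=
  sInf {m : ℕ | ∃ a : Fin m → (i : Fin k) → Fin (n i) → ℝ,
    A = fun idx => ∑ j, ∏ i, a j i (idx i)}

/-- Essential uniqueness of the rank decomposition: any two decompositions of `A`
into `rank A` unit-norm rank-one summands agree up to permutation and scalings
whose product over each summand is `1`. -/
def Identifiable {n : Fin k → ℕ} (A : Tensor n) : Prop :=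
  ∀ R : ℕ, trank A = R →
    ∀ (lam mu : Fin R → ℝ) (u v : Fac n R),
      (∀ i, unitCols (u i)) → (∀ i, unitCols (v i)) →
      A = decomp lam u → A = decomp mu v →
      ∃ (π : Equiv.Perm (Fin R)) (α : Fin k → Fin R → ℝ),
        (∀ i j, α i j ≠ 0) ∧
        (∀ i j t, v i (π j) t = α i j * u i j t) ∧
        (∀ j, (∏ i, α i j) * mu (π j) = lam j)

/-- The Hilbert–Schmidt inner product of two tensors. -/
def tdot {n : Fin k → ℕ} (A B : Tensor n) : ℝ := ∑ idx, A idx * B idx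

/-- The parameter space `∏ᵢ ℝ^{nᵢ × r} × ℝ^r`. -/
abbrev PSpace (n : Fin k → ℕ) (r : ℕ) : Type := Fac n r × (Fin r → ℝ)

/-- The parametrization map `φ_{n,r}(U, λ) = ∑ j, λ_j u_j^{(1)} ⊗ ⋯ ⊗ u_j^{(k)}`. -/
def phi {n : Fin k → ℕ} {r : ℕ} (y : PSpace n r) : Tensor n :=
  fun idx => ∑ j, y.2 j * ∏ i, y.1 i j (idx i)

/-- Feasibility of a tuple of factor matrices: unit-norm columns everywhere,
orthonormal columns in the first `s` factor matrices. -/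
def Feas (s : ℕ) {n : Fin k → ℕ} {r : ℕ} (U : Fac n r) : Prop :=
  (∀ i, unitCols (U i)) ∧ ∀ i : Fin k, (i : ℕ) < s → orthoCols (U i)

/-- `V_{n,r} = V(r,n₁) × ⋯ × V(r,n_s) × B(r,n_{s+1}) × ⋯ × B(r,n_k) × ℝ^r`. -/
def Vset (s : ℕ) (n : Fin k → ℕ) (r : ℕ) : Set (PSpace n r) :=
  {y | Feas s y.1}

/-- `W_{n,r}`: the last `k - s` factor matrices have full column rank. -/
def Wset (s : ℕ) (n : Fin k → ℕ) (r : ℕ) : Set (PSpace n r) :=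
  {y | y ∈ Vset s n r ∧ ∀ i : Fin k, s ≤ (i : ℕ) → LinearIndependent ℝ (y.1 i)}

/-- `W_{n,r,∗}`: additionally all coefficients are nonzero. -/
def WsetStar (s : ℕ) (n : Fin k → ℕ) (r : ℕ) : Set (PSpace n r) :=
  {y | y ∈ Wset s n r ∧ ∀ j, y.2 j ≠ 0}

/-- `W_{n,r,+}`: additionally all coefficients are nonnegative. -/
def WsetPlus (s : ℕ) (n : Fin k → ℕ) (r : ℕ) : Set (PSpace n r) :=
  {y | y ∈ Wset s n r ∧ ∀ j, 0 ≤ y.2 j}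

/-- `W_{n,r,++}`: additionally all coefficients are positive. -/
def WsetPP (s : ℕ) (n : Fin k → ℕ) (r : ℕ) : Set (PSpace n r) :=
  {y | y ∈ Wset s n r ∧ ∀ j, 0 < y.2 j}

/-- The squared-distance objective `g(U,x) = ½ ‖A − φ(U,x)‖²`. -/
noncomputable def gfun {n : Fin k → ℕ} {r : ℕ} (A : Tensor n) (y : PSpace n r) : ℝ :=
  (1 / 2) * tdot (fun e => A e - phi y e) (fun e => A e - phi y e)

/-- `v` is a tangent vector of the set `M` at `x`: it is the velocity of a smooth
curve through `x` lying in `M`. -/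
def InTangent {E : Type*} [NormedAddCommGroup E] [NormedSpace ℝ E]
    (M : Set E) (x v : E) : Prop :=
  ∃ γ : ℝ → E, ContDiff ℝ (⊤ : ℕ∞) γ ∧ (∀ t, γ t ∈ M) ∧ γ 0 = x ∧ HasDerivAt γ v 0

/-- `x` is a critical point of `g` restricted to `M`: the derivative of `g` along
every smooth curve in `M` through `x` vanishes. -/
def IsCriticalOn {E : Type*} [NormedAddCommGroup E] [NormedSpace ℝ E]
    (g : E → ℝ) (M : Set E) (x : E) : Prop :=
  x ∈ M ∧ ∀ γ : ℝ → E, ContDiff ℝ (⊤ : ℕ∞) γ → (∀ t, γ t ∈ M) → γ 0 = x →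
    deriv (g ∘ γ) 0 = 0

/-- `x` is a nondegenerate critical point of `g` on `M`: critical, and the Hessian
quadratic form `Q` (given by second derivatives of `g` along curves) induces a
nondegenerate bilinear form on the tangent space of `M` at `x`. -/
def IsNondegCriticalOn {E : Type*} [NormedAddCommGroup E] [NormedSpace ℝ E]
    (g : E → ℝ) (M : Set E) (x : E) : Prop :=
  IsCriticalOn g M x ∧
  ∃ Q : E → ℝ,
    (∀ (v : E) (γ : ℝ → E), ContDiff ℝ (⊤ : ℕ∞) γ → (∀ t, γ t ∈ M) → γ 0 = x →
      HasDerivAt γ v 0 → iteratedDeriv 2 (g ∘ γ) 0 = Q v) ∧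
    (∀ v, InTangent M x v → v ≠ 0 → ∃ w, InTangent M x w ∧ Q (v + w) ≠ Q v + Q w)

/-- The contraction `A τ_i(x)` of `A` with all columns `u l` except the `i`-th one,
a vector in `ℝ^{n i}`. -/
noncomputable def ctr {n : Fin k → ℕ} (A : Tensor n) (u : (l : Fin k) → Fin (n l) → ℝ)
    (i : Fin k) (t : Fin (n i)) : ℝ :=
  ∑ idx : Idx n, if idx i = t then A idx * ∏ l ∈ Finset.univ.erase i, u l (idx l) else 0

/-- `λ_j(U) = ⟨A, u_j^{(1)} ⊗ ⋯ ⊗ u_j^{(k)}⟩`. -/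
def lamOf {n : Fin k → ℕ} {r : ℕ} (A : Tensor n) (U : Fac n r) (j : Fin r) : ℝ :=
  ∑ idx : Idx n, A idx * ∏ l, U l j (idx l)

/-- KKT point of (LRPOTA)/(mLRPOTA): feasibility, `x j = λ_j(U)`, and stationarity
`V^{(i)} Λ = U^{(i)} P_i` (with `P_i` symmetric) for `i ≤ s`, and
`V^{(i)} Λ = U^{(i)} diag p` for `i > s`. -/
def IsKKT (s : ℕ) {n : Fin k → ℕ} {r : ℕ} (A : Tensor n) (U : Fac n r)
    (x : Fin r → ℝ) : Prop :=
  Feas s U ∧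
  (∀ j, x j = lamOf A U j) ∧
  (∀ i : Fin k, (i : ℕ) < s → ∃ P : Matrix (Fin r) (Fin r) ℝ, P.IsSymm ∧
    ∀ j t, ctr A (fun l => U l j) i t * x j = ∑ l, U i l t * P l j) ∧
  (∃ p : Fin r → ℝ, ∀ i : Fin k, s ≤ (i : ℕ) → ∀ j t,
    ctr A (fun l => U l j) i t * x j = U i j t * p j)

/-- KKT point of (LRPOTA) in the parameter space `V_{n,r}`: the residual
`A − φ(y)` is orthogonal to the image of the tangent space under `dφ_y`. -/
def IsKKTparam (s : ℕ) {n : Fin k → ℕ} {r : ℕ} (A : Tensor n) (y : PSpace n r) : Prop :=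
  y ∈ Vset s n r ∧
  ∀ (γ : ℝ → PSpace n r) (w : Tensor n),
    ContDiff ℝ (⊤ : ℕ∞) γ → (∀ t, γ t ∈ Vset s n r) → γ 0 = y →
    HasDerivAt (fun t => phi (γ t)) w 0 →
    tdot (fun e => A e - phi y e) w = 0

/-- The common zero set of a family of real polynomials. -/
def zeroSet {σ : Type*} (S : Set (MvPolynomial σ ℝ)) : Set (σ → ℝ) :=
  {x | ∀ p ∈ S, MvPolynomial.eval x p = 0}

/-- A real algebraic variety: the common zero set of a family of polynomials. -/
def IsRealVariety {σ : Type*} (V : Set (σ → ℝ)) : Prop := ∃ S, V = zeroSet S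

/-- `x` is a smooth point of `S` of dimension `d`: near `x`, the set `S` is smoothly
parametrized by an open subset of `ℝ^d` (with a smooth ambient inverse chart). -/
def SmoothPt {E : Type*} [NormedAddCommGroup E] [NormedSpace ℝ E]
    (S : Set E) (d : ℕ) (x : E) : Prop :=
  ∃ (U : Set E) (O : Set (Fin d → ℝ)) (f : E → Fin d → ℝ) (g : (Fin d → ℝ) → E),
    IsOpen U ∧ x ∈ U ∧ IsOpen O ∧ ContDiff ℝ (⊤ : ℕ∞) f ∧ ContDiff ℝ (⊤ : ℕ∞) g ∧
    g '' O = S ∩ U ∧ (∀ z ∈ S ∩ U, g (f z) = z) ∧ (∀ w ∈ O, f (g w) = w)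

/-- `S` is a smooth embedded submanifold of dimension `d`. -/
def IsSmoothMfldDim {E : Type*} [NormedAddCommGroup E] [NormedSpace ℝ E]
    (S : Set E) (d : ℕ) : Prop :=
  ∀ x ∈ S, SmoothPt S d x


/-- The mLRPOTA objective `f(U) = ∑ j, λ_j(U)²`. -/
noncomputable def fOf {n : Fin k → ℕ} {r : ℕ} (A : Tensor n) (U : Fac n r) : ℝ :=
  ∑ j, (lamOf A U j) ^ 2

/-- The squared residual `‖A − φ(y)‖²`. -/
noncomputable def resid {n : Fin k → ℕ} {r : ℕ} (A : Tensor n) (y : PSpace n r) : ℝ :=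
  tdot (fun e => A e - phi y e) (fun e => A e - phi y e)

lemma restrict_kkt {s : ℕ} {n : Fin k → ℕ} {r m : ℕ} (A : Tensor n) (U : Fac n r)
    (x : Fin r → ℝ) (e : Fin m → Fin r) (he : Function.Injective e)
    (hK : IsKKT s A U x) (hz : ∀ j, (∀ l, e l ≠ j) → x j = 0) :
    IsKKT s A (fun i l => U i (e l)) (fun l => x (e l)) := by
  obtain ⟨⟨hunit, hortho⟩, hlam, hP, hp⟩ := hK
  refine ⟨⟨fun i j => hunit i (e j), fun i hi j j' => ?_⟩,
    fun j => hlam (e j), fun i hi => ?_, ?_⟩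
  · rw [hortho i hi (e j) (e j')]
    simp [he.eq_iff]
  · obtain ⟨P, hPs, hPe⟩ := hP i hi
    have hcol : ∀ jz, x jz = 0 → ∀ l, P l jz = 0 := by
      intro jz hx l
      have h0 : ∀ t, ∑ l', U i l' t * P l' jz = 0 := by
        intro t
        rw [← hPe jz t, hx, mul_zero]
      have h1 : P l jz = ∑ l', (if l = l' then (1 : ℝ) else 0) * P l' jz := by simp
      rw [h1]
      simp_rw [← hortho i hi l, Finset.sum_mul, mul_assoc]
      rw [Finset.sum_comm]
      simp_rw [← Finset.mul_sum, h0, mul_zero, Finset.sum_const_zero]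
    refine ⟨fun l j => P (e l) (e j), ?_, ?_⟩
    · exact Matrix.ext fun l j => hPs.apply (e l) (e j)
    · intro j t
      have key : ∑ l, U i l t * P l (e j) = ∑ l, U i (e l) t * P (e l) (e j) := by
        have himg : ∑ l ∈ Finset.univ.image e, U i l t * P l (e j)
            = ∑ l : Fin m, U i (e l) t * P (e l) (e j) :=
          Finset.sum_image (fun a _ b _ h => he h)
        rw [← himg]
        refine (Finset.sum_subset (Finset.subset_univ _) ?_).symm
        intro l _ hl
        have hxl : x l = 0 := by
          refine hz l fun l' hl' => hl ?_
          exact hl' ▸ Finset.mem_image_of_mem e (Finset.mem_univ l')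
        have : P (e j) l = 0 := hcol l hxl (e j)
        have hsym : P l (e j) = P (e j) l := hPs.apply (e j) l
        rw [hsym, this, mul_zero]
      rw [← key]
      exact hPe (e j) t
  · obtain ⟨p, hpe⟩ := hp
    exact ⟨fun l => p (e l), fun i hi j t => hpe i hi (e j) t⟩

/-- Proposition: KKT reduction.
If `U` is a KKT point of mLRPOTA(r+1) and `λ_j(U) = 0`, then deleting the `j`-th column
of every factor matrix yields a KKT point of mLRPOTA(r).  More generally, if
`λ_j(U) = 0` exactly for `j` in a subset `T` of cardinality `< r`, deleting the columns
indexed by `T` yields a primitive KKT point (all `λ_l ≠ 0`) of mLRPOTA(r − |T|). -/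
theorem kkt_reduction
    (k s : ℕ) (n : Fin k → ℕ) (hk : 3 ≤ k) (hs1 : 1 ≤ s) (hsk : s ≤ k)
    (A : Tensor n) :
    (∀ (r : ℕ) (U : Fac n (r + 1)) (x : Fin (r + 1) → ℝ),
      IsKKT s A U x → ∀ j : Fin (r + 1), lamOf A U j = 0 →
      IsKKT s A (fun i l => U i (j.succAbove l)) (fun l => x (j.succAbove l))) ∧
    (∀ (r : ℕ) (U : Fac n r) (x : Fin r → ℝ) (T : Finset (Fin r)),
      IsKKT s A U x → T.card < r →
      (∀ j, lamOf A U j = 0 ↔ j ∈ T) →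
      ∀ e : Fin (r - T.card) → Fin r, StrictMono e →
      (∀ j : Fin r, (∃ l, e l = j) ↔ j ∉ T) →
      (IsKKT s A (fun i l => U i (e l)) (fun l => x (e l)) ∧
       ∀ l, lamOf A (fun i l' => U i (e l')) l ≠ 0)) := by
  constructor
  · intro r U x hK j hj
    refine restrict_kkt A U x j.succAbove (Fin.succAbove_right_injective) hK ?_
    intro l hl
    have hlj : l = j := by
      by_contra h
      obtain ⟨m, hm⟩ := Fin.exists_succAbove_eq h
      exact hl m hm
    rw [hlj, hK.2.1 j, hj]
  · intro r U x T hK hT hlamT e he hrange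
    refine ⟨restrict_kkt A U x e he.injective hK ?_, ?_⟩
    · intro j hjn
      have hjT : j ∈ T := by
        by_contra h
        obtain ⟨l, hl⟩ := (hrange j).mpr h
        exact hjn l hl
      rw [hK.2.1 j]
      exact (hlamT j).mpr hjT
    · intro l hl0
      have : lamOf A U (e l) = 0 := hl0
      exact ((hrange (e l)).mp ⟨l, rfl⟩) ((hlamT (e l)).mp this)

end POT
end

section
/- A point (U,x) ∈ W_{n,r,∗} is a critical point of the function g(U,x) = ½‖A − (U^{(1)},…,U^{(k)})·diag_k(x)‖² on the manifold W_{n,r,∗} (i.e., the Riemannian gradient of g vanishes at (U,x)) if and only if (U, diag_k(x)) is a KKT point of the minimization problem LRPOTA. -/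
open scoped BigOperators

namespace POT

variable {k : ℕ}

/-! ### Auxiliary lemmas -/

section Aux

variable {n : Fin k → ℕ} {r : ℕ}

/-- Euclidean dot product of two vectors. -/
def dot {m : ℕ} (u w : Fin m → ℝ) : ℝ := ∑ t, u t * w t

lemma dot_comm {m : ℕ} (u w : Fin m → ℝ) : dot u w = dot w u := by
  unfold dot; exact Finset.sum_congr rfl fun t _ => mul_comm _ _

/-- Sum of a product over a Pi-type index equals product of sums. -/
lemma sum_prod_pi (h : (m : Fin k) → Fin (n m) → ℝ) :
    ∑ idx : Idx n, ∏ m, h m (idx m) = ∏ m, ∑ a, h m a :=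
  (Fintype.prod_sum h).symm

/-- Constrained sum of a product over a Pi-type index. -/
lemma sum_if_prod (h : (m : Fin k) → Fin (n m) → ℝ) (i : Fin k) (t : Fin (n i)) :
    ∑ idx : Idx n, (if idx i = t then ∏ m, h m (idx m) else 0)
      = h i t * ∏ m ∈ Finset.univ.erase i, (∑ a, h m a) := by
  classical
  set H : (m : Fin k) → Fin (n m) → ℝ :=
    Function.update h i (fun a => if a = t then h i a else 0) with hH
  have key : ∀ idx : Idx n,
      (if idx i = t then ∏ m, h m (idx m) else 0) = ∏ m, H m (idx m) := by
    intro idx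
    by_cases hc : idx i = t
    · rw [if_pos hc]
      refine Finset.prod_congr rfl fun m _ => ?_
      rcases eq_or_ne m i with rfl | hm
      · simp [hH, Function.update_self, hc]
      · simp [hH, Function.update_of_ne hm]
    · rw [if_neg hc]
      refine (Finset.prod_eq_zero (Finset.mem_univ i) ?_).symm
      simp [hH, Function.update_self, hc]
  rw [Finset.sum_congr rfl fun idx _ => key idx, sum_prod_pi]
  rw [← Finset.mul_prod_erase Finset.univ _ (Finset.mem_univ i)]
  congr 1
  · simp [hH, Function.update_self]
  · refine Finset.prod_congr rfl fun m hm => ?_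
    have hm' : m ≠ i := (Finset.mem_erase.1 hm).1
    simp [hH, Function.update_of_ne hm']

/-- Pairing a tensor against a "rank-one with one slot replaced" tensor gives the
contraction paired with the replacement vector. -/
lemma tdot_slice (B : Tensor n) (u : (l : Fin k) → Fin (n l) → ℝ) (i : Fin k)
    (w : Fin (n i) → ℝ) :
    tdot B (fun e => (∏ l ∈ Finset.univ.erase i, u l (e l)) * w (e i))
      = ∑ t, ctr B u i t * w t := by
  classical
  unfold tdot ctr
  simp only [Finset.sum_mul, ite_mul, zero_mul]
  rw [Finset.sum_comm]
  refine Finset.sum_congr rfl fun idx _ => ?_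
  rw [Finset.sum_ite_eq (Finset.univ : Finset (Fin (n i))) (idx i)
    (fun t => B idx * (∏ l ∈ Finset.univ.erase i, u l (idx l)) * w t)]
  simp [mul_assoc]

lemma ctr_sub (B C : Tensor n) (u : (l : Fin k) → Fin (n l) → ℝ) (i : Fin k)
    (t : Fin (n i)) :
    ctr (fun e => B e - C e) u i t = ctr B u i t - ctr C u i t := by
  unfold ctr
  rw [← Finset.sum_sub_distrib]
  refine Finset.sum_congr rfl fun idx _ => ?_
  by_cases hc : idx i = t <;> simp [hc, sub_mul]

lemma ctr_dot_col (B : Tensor n) (u : (l : Fin k) → Fin (n l) → ℝ) (i : Fin k) :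
    ∑ t, ctr B u i t * u i t = tdot B (fun e => ∏ l, u l (e l)) := by
  rw [← tdot_slice B u i (u i)]
  unfold tdot
  refine Finset.sum_congr rfl fun idx _ => ?_
  show B idx * ((∏ l ∈ Finset.univ.erase i, u l (idx l)) * u i (idx i))
    = B idx * ∏ l, u l (idx l)
  rw [mul_comm (∏ l ∈ Finset.univ.erase i, u l (idx l)) (u i (idx i)),
    Finset.mul_prod_erase Finset.univ (fun l => u l (idx l)) (Finset.mem_univ i)]

/-- The contraction of `phi y` against all columns `j` except slot `i`. -/
lemma ctr_phi (y : PSpace n r) (j : Fin r) (i : Fin k) (t : Fin (n i)) :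
    ctr (phi y) (fun l => y.1 l j) i t
      = ∑ l, y.2 l * (y.1 i l t *
          ∏ m ∈ Finset.univ.erase i, (∑ a, y.1 m l a * y.1 m j a)) := by
  classical
  unfold ctr phi
  have step1 : ∀ idx : Idx n,
      (if idx i = t then (∑ l, y.2 l * ∏ m, y.1 m l (idx m)) *
          ∏ m ∈ Finset.univ.erase i, y.1 m j (idx m) else 0)
      = ∑ l, y.2 l * (if idx i = t then
          ∏ m, (if m = i then y.1 m l (idx m) else y.1 m l (idx m) * y.1 m j (idx m))
          else 0) := by
    intro idx
    by_cases hc : idx i = t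
    · simp only [if_pos hc, Finset.sum_mul, Finset.mul_sum ]
      refine Finset.sum_congr rfl fun l _ => ?_
      rw [mul_assoc]
      congr 1
      have hprod : ∀ mm ∈ Finset.univ.erase i,
          (if mm = i then y.1 mm l (idx mm) else y.1 mm l (idx mm) * y.1 mm j (idx mm))
          = y.1 mm l (idx mm) * y.1 mm j (idx mm) := by
        intro mm hmm
        rw [if_neg (Finset.mem_erase.1 hmm).1]
      rw [← Finset.mul_prod_erase Finset.univ
            (fun m => if m = i then y.1 m l (idx m) else y.1 m l (idx m) * y.1 m j (idx m))
            (Finset.mem_univ i), if_pos rfl, Finset.prod_congr rfl hprod,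
          ← Finset.mul_prod_erase Finset.univ (fun m => y.1 m l (idx m)) (Finset.mem_univ i),
          Finset.prod_mul_distrib]
      ring
    · simp [if_neg hc]
  rw [Finset.sum_congr rfl fun idx _ => step1 idx, Finset.sum_comm]
  refine Finset.sum_congr rfl fun l _ => ?_
  rw [← Finset.mul_sum]
  congr 1
  rw [sum_if_prod (fun m a => if m = i then y.1 m l a else y.1 m l a * y.1 m j a) i t]
  congr 1
  · rw [if_pos rfl]
  · refine Finset.prod_congr rfl fun m hm => ?_
    have hm' : m ≠ i := (Finset.mem_erase.1 hm).1
    simp [hm']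

/-- Over a feasible point with at least one orthonormal factor `≠ i`,
the contraction of `phi` collapses. -/
lemma ctr_phi_orth (hk : 3 ≤ k) (s : ℕ) (hs1 : 1 ≤ s) (y : PSpace n r)
    (hF : Feas s y.1) (j : Fin r) (i : Fin k) (hi : s ≤ (i : ℕ)) (t : Fin (n i)) :
    ctr (phi y) (fun l => y.1 l j) i t = y.2 j * y.1 i j t := by
  classical
  have hk0 : 0 < k := by omega
  set i0 : Fin k := ⟨0, hk0⟩ with hi0
  have hi0i : i0 ≠ i := by
    intro h
    have : (i0 : ℕ) = (i : ℕ) := by rw [h]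
    simp [hi0] at this
    omega
  rw [ctr_phi]
  rw [Finset.sum_eq_single j]
  · congr 1
    rw [Finset.prod_congr rfl (fun m _ => hF.1 m j), Finset.prod_const_one, mul_one]
  · intro l _ hl
    have hzero : (∑ a, y.1 i0 l a * y.1 i0 j a) = 0 := by
      have := hF.2 i0 (by simp [hi0]; omega) l j
      rw [this, if_neg hl]
    refine mul_eq_zero_of_right _ (mul_eq_zero_of_right _ ?_)
    exact Finset.prod_eq_zero (Finset.mem_erase.2 ⟨hi0i, Finset.mem_univ i0⟩) hzero
  · intro h
    exact absurd (Finset.mem_univ j) h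

/-- Pairing of the residual with the `j`-th rank-one term. -/
lemma tdot_res_rank1 (s : ℕ) (hk : 3 ≤ k) (hs1 : 1 ≤ s) (A : Tensor n)
    (y : PSpace n r) (hF : Feas s y.1) (j : Fin r) :
    tdot (fun e => A e - phi y e) (fun e => ∏ i, y.1 i j (e i))
      = lamOf A y.1 j - y.2 j := by
  classical
  have hA : tdot A (fun e => ∏ i, y.1 i j (e i)) = lamOf A y.1 j := rfl
  have hphi : tdot (phi y) (fun e => ∏ i, y.1 i j (e i)) = y.2 j := by
    unfold tdot phi
    have step : ∀ e : Idx n,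
        (∑ l, y.2 l * ∏ i, y.1 i l (e i)) * ∏ i, y.1 i j (e i)
        = ∑ l, y.2 l * ∏ i, (y.1 i l (e i) * y.1 i j (e i)) := by
      intro e
      rw [Finset.sum_mul]
      exact Finset.sum_congr rfl fun l _ => by
        rw [mul_assoc, ← Finset.prod_mul_distrib]
    rw [Finset.sum_congr rfl fun e _ => step e, Finset.sum_comm]
    have hk0 : 0 < k := by omega
    set i0 : Fin k := ⟨0, hk0⟩ with hi0
    rw [Finset.sum_eq_single j]
    · rw [← Finset.mul_sum, sum_prod_pi (fun m a => y.1 m j a * y.1 m j a)]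
      rw [Finset.prod_congr rfl (fun m _ => hF.1 m j), Finset.prod_const_one, mul_one]
    · intro l _ hl
      rw [← Finset.mul_sum, sum_prod_pi (fun m a => y.1 m l a * y.1 m j a)]
      refine mul_eq_zero_of_right _ ?_
      refine Finset.prod_eq_zero (Finset.mem_univ i0) ?_
      have := hF.2 i0 (by simp [hi0]; omega) l j
      rw [this, if_neg hl]
    · intro h
      exact absurd (Finset.mem_univ j) h
  unfold tdot at *
  simp only [sub_mul]
  rw [Finset.sum_sub_distrib]
  rw [hA, hphi]

/-- Formal differential of `phi` at `y` applied to `v`. -/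
def dphi (y v : PSpace n r) : Tensor n :=
  fun e => ∑ j, (v.2 j * ∏ i, y.1 i j (e i)
    + y.2 j * ∑ i, (∏ l ∈ Finset.univ.erase i, y.1 l j (e l)) * v.1 i j (e i))

lemma tdot_dphi (B : Tensor n) (y v : PSpace n r) :
    tdot B (dphi y v)
      = ∑ j, v.2 j * tdot B (fun e => ∏ i, y.1 i j (e i))
        + ∑ j, y.2 j * ∑ i, ∑ t, ctr B (fun l => y.1 l j) i t * v.1 i j t := by
  classical
  unfold tdot dphi
  simp only [Finset.mul_sum, mul_add]
  rw [Finset.sum_comm, ← Finset.sum_add_distrib]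
  refine Finset.sum_congr rfl fun j _ => ?_
  rw [Finset.sum_add_distrib]
  congr 1
  · exact Finset.sum_congr rfl fun e _ => by ring
  · rw [Finset.sum_comm]
    refine Finset.sum_congr rfl fun i _ => ?_
    rw [← Finset.mul_sum, ← tdot_slice B (fun l => y.1 l j) i (v.1 i j)]
    unfold tdot
    rw [Finset.mul_sum]
    exact Finset.sum_congr rfl fun e _ => by ring

section DerivMachinery

variable {γ : ℝ → PSpace n r} {v : PSpace n r}

lemma hasDerivAt_coord1 (h : HasDerivAt γ v 0) (i : Fin k) (j : Fin r) (m : Fin (n i)) :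
    HasDerivAt (fun t => (γ t).1 i j m) (v.1 i j m) 0 :=
  hasDerivAt_pi.1 (hasDerivAt_pi.1 (hasDerivAt_pi.1 h.fst i) j) m

lemma hasDerivAt_coord2 (h : HasDerivAt γ v 0) (j : Fin r) :
    HasDerivAt (fun t => (γ t).2 j) (v.2 j) 0 :=
  hasDerivAt_pi.1 h.snd j

lemma hasDerivAt_phi_comp (h : HasDerivAt γ v 0) (e : Idx n) :
    HasDerivAt (fun t => phi (γ t) e) (dphi (γ 0) v e) 0 := by
  classical
  unfold phi dphi
  refine HasDerivAt.fun_sum fun j _ => ?_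
  have hprod : HasDerivAt (fun t => ∏ i, (γ t).1 i j (e i))
      (∑ i, (∏ l ∈ Finset.univ.erase i, (γ 0).1 l j (e l)) • v.1 i j (e i)) 0 :=
    HasDerivAt.fun_finsetProd fun i _ => hasDerivAt_coord1 h i j (e i)
  have := (hasDerivAt_coord2 h j).fun_mul hprod
  convert this using 1
  all_goals rfl

lemma hasDerivAt_g_comp (A : Tensor n) (h : HasDerivAt γ v 0) :
    HasDerivAt (fun t => gfun A (γ t))
      (-(tdot (fun e => A e - phi (γ 0) e) (dphi (γ 0) v))) 0 := by
  classical
  have hterm : ∀ e : Idx n, HasDerivAt (fun t => (A e - phi (γ t) e) * (A e - phi (γ t) e))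
      (-(dphi (γ 0) v e) * (A e - phi (γ 0) e) + (A e - phi (γ 0) e) * -(dphi (γ 0) v e)) 0 := by
    intro e
    have hres : HasDerivAt (fun t => A e - phi (γ t) e) (-(dphi (γ 0) v e)) 0 :=
      (hasDerivAt_phi_comp h e).const_sub (A e)
    exact hres.mul hres
  have hsum : HasDerivAt (fun t => ∑ e : Idx n, (A e - phi (γ t) e) * (A e - phi (γ t) e))
      (∑ e : Idx n, (-(dphi (γ 0) v e) * (A e - phi (γ 0) e)
        + (A e - phi (γ 0) e) * -(dphi (γ 0) v e))) 0 :=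
    HasDerivAt.fun_sum fun e _ => hterm e
  have hg : HasDerivAt (fun t => gfun A (γ t))
      ((1 / 2 : ℝ) * ∑ e : Idx n, (-(dphi (γ 0) v e) * (A e - phi (γ 0) e)
        + (A e - phi (γ 0) e) * -(dphi (γ 0) v e))) 0 := by
    have := hsum.const_mul (1 / 2 : ℝ)
    convert this using 1
    all_goals rfl
  convert hg using 1
  unfold tdot
  rw [Finset.mul_sum, ← Finset.sum_neg_distrib]
  exact Finset.sum_congr rfl fun e _ => by ring

/-- Criticality pairs the residual to zero against any realized tangent. -/
lemma crit_pairing {s : ℕ} {A : Tensor n} {y : PSpace n r}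
    (hcrit : IsCriticalOn (gfun A) (WsetStar s n r) y)
    (γ : ℝ → PSpace n r) (v : PSpace n r)
    (hγ : ContDiff ℝ (⊤ : ℕ∞) γ) (hmem : ∀ t, γ t ∈ WsetStar s n r) (h0 : γ 0 = y)
    (hd : HasDerivAt γ v 0) :
    tdot (fun e => A e - phi y e) (dphi y v) = 0 := by
  have hderiv := hcrit.2 γ hγ hmem h0
  have h2 := hasDerivAt_g_comp A hd
  rw [h0] at h2
  have h3 : deriv (gfun A ∘ γ) 0 = -(tdot (fun e => A e - phi y e) (dphi y v)) :=
    h2.deriv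
  rw [hderiv] at h3
  linarith

lemma hasDerivAt_const_curve {h : ℝ → ℝ} {c d : ℝ} (hc : ∀ t, h t = c)
    (hd : HasDerivAt h d 0) : d = 0 := by
  have heq : h = fun _ => c := funext hc
  rw [heq] at hd
  exact hd.unique (hasDerivAt_const 0 c)

end DerivMachinery

lemma mem_WsetStar_iff {s : ℕ} {z : PSpace n r} :
    z ∈ WsetStar s n r ↔
      (Feas s z.1 ∧ ∀ i : Fin k, s ≤ (i : ℕ) → LinearIndependent ℝ (z.1 i))
        ∧ ∀ j, z.2 j ≠ 0 := by
  rfl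

/-- Step 1: at a critical point, `x j = λ_j(U)`. -/
lemma crit_lam {s : ℕ} (hk : 3 ≤ k) (hs1 : 1 ≤ s) {A : Tensor n} {y : PSpace n r}
    (hy : y ∈ WsetStar s n r) (hcrit : IsCriticalOn (gfun A) (WsetStar s n r) y)
    (j : Fin r) : y.2 j = lamOf A y.1 j := by
  classical
  obtain ⟨⟨hfeas, hli⟩, hnz⟩ := mem_WsetStar_iff.1 hy
  set γ : ℝ → PSpace n r :=
    fun t => (y.1, fun l => if l = j then y.2 l * Real.exp t else y.2 l) with hγ
  set v : PSpace n r := ((0 : Fac n r), fun l => if l = j then y.2 l else 0) with hv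
  have hsm : ContDiff ℝ (⊤ : ℕ∞) γ := by
    refine ContDiff.prodMk contDiff_const (contDiff_pi.2 fun l => ?_)
    by_cases h : l = j
    · simp only [if_pos h]
      exact contDiff_const.mul Real.contDiff_exp
    · simp only [if_neg h]
      exact contDiff_const
  have hmem : ∀ t, γ t ∈ WsetStar s n r := by
    intro t
    refine mem_WsetStar_iff.2 ⟨⟨hfeas, hli⟩, fun l => ?_⟩
    by_cases h : l = j
    · simp only [hγ, if_pos h]
      exact mul_ne_zero (hnz l) (Real.exp_ne_zero t)
    · simp only [hγ, if_neg h]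
      exact hnz l
  have h0 : γ 0 = y := by
    have : (fun l => if l = j then y.2 l * Real.exp 0 else y.2 l) = y.2 :=
      funext fun l => by by_cases h : l = j <;> simp [h]
    simp only [hγ, this]
  have hd : HasDerivAt γ v 0 := by
    refine HasDerivAt.prodMk (hasDerivAt_const 0 y.1) (hasDerivAt_pi.2 fun l => ?_)
    by_cases h : l = j
    · simp only [hγ, hv, if_pos h]
      have := (Real.hasDerivAt_exp 0).const_mul (y.2 l)
      convert this using 1
      · rfl
      simp
    · simp only [hγ, hv, if_neg h]
      exact hasDerivAt_const 0 (y.2 l)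
  have hpair := crit_pairing hcrit γ v hsm hmem h0 hd
  rw [tdot_dphi] at hpair
  have hzero2 : ∑ j', y.2 j' * ∑ i, ∑ t,
      ctr (fun e => A e - phi y e) (fun l => y.1 l j') i t * v.1 i j' t = 0 := by
    refine Finset.sum_eq_zero fun j' _ => ?_
    simp [hv]
  rw [hzero2, add_zero] at hpair
  have hone : ∑ j', v.2 j' * tdot (fun e => A e - phi y e)
      (fun e => ∏ i, y.1 i j' (e i)) = y.2 j * (lamOf A y.1 j - y.2 j) := by
    rw [Finset.sum_eq_single j]
    · rw [tdot_res_rank1 s hk hs1 A y hfeas j]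
      simp [hv]
    · intro l _ hl
      simp [hv, hl]
    · intro h
      exact absurd (Finset.mem_univ j) h
  rw [hone] at hpair
  rcases mul_eq_zero.1 hpair with h | h
  · exact absurd h (hnz j)
  · linarith

section Bump

/-- A smooth bump reparametrization with `bump δ 0 = 0`, `(bump δ)' 0 = 1` and
`|bump δ t| < δ`. -/
noncomputable def bump (δ : ℝ) (t : ℝ) : ℝ := δ * t / Real.sqrt (δ ^ 2 + t ^ 2)

lemma bump_denom_pos {δ : ℝ} (hδ : 0 < δ) (t : ℝ) : 0 < δ ^ 2 + t ^ 2 := by positivity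

lemma bump_zero (δ : ℝ) : bump δ 0 = 0 := by simp [bump]

lemma bump_contDiff {δ : ℝ} (hδ : 0 < δ) : ContDiff ℝ (⊤ : ℕ∞) (bump δ) := by
  refine ContDiff.div (contDiff_const.mul contDiff_id) ?_ ?_
  · exact ContDiff.sqrt (contDiff_const.add (contDiff_id.pow 2))
      (fun t => (bump_denom_pos hδ t).ne')
  · exact fun t => (Real.sqrt_pos.2 (bump_denom_pos hδ t)).ne'

lemma bump_abs_lt {δ : ℝ} (hδ : 0 < δ) (t : ℝ) : |bump δ t| < δ := by
  have hpos := bump_denom_pos hδ t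
  have hs : 0 < Real.sqrt (δ ^ 2 + t ^ 2) := Real.sqrt_pos.2 hpos
  rw [bump, abs_div, abs_of_pos hs, div_lt_iff₀ hs]
  have h1 : |δ * t| = δ * |t| := by
    rw [abs_mul, abs_of_pos hδ]
  rw [h1]
  have habs : |t| < Real.sqrt (δ ^ 2 + t ^ 2) := by
    rw [← Real.sqrt_sq_eq_abs]
    exact Real.sqrt_lt_sqrt (sq_nonneg t) (by nlinarith)
  nlinarith [mul_lt_mul_of_pos_left habs hδ]

lemma bump_hasDerivAt {δ : ℝ} (hδ : 0 < δ) : HasDerivAt (bump δ) 1 0 := by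
  have hnum : HasDerivAt (fun t : ℝ => δ * t) δ 0 := by
    simpa using (hasDerivAt_id (0 : ℝ)).const_mul δ
  have hinner : HasDerivAt (fun t : ℝ => δ ^ 2 + t ^ 2) 0 0 := by
    have := ((hasDerivAt_id (0 : ℝ)).pow 2).const_add (δ ^ 2)
    simpa using this
  have hne : δ ^ 2 + (0 : ℝ) ^ 2 ≠ 0 := (bump_denom_pos hδ 0).ne'
  have hsq : HasDerivAt (fun t : ℝ => Real.sqrt (δ ^ 2 + t ^ 2))
      (1 / (2 * Real.sqrt (δ ^ 2 + (0 : ℝ) ^ 2)) * 0) 0 :=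
    (Real.hasDerivAt_sqrt hne).comp 0 hinner
  have hden0 : Real.sqrt (δ ^ 2 + (0 : ℝ) ^ 2) ≠ 0 :=
    (Real.sqrt_pos.2 (bump_denom_pos hδ 0)).ne'
  have := hnum.fun_div hsq hden0
  convert this using 1
  · rfl
  · rfl
  · rfl
  have hs : Real.sqrt (δ ^ 2 + (0 : ℝ) ^ 2) = δ := by
    simpa using Real.sqrt_sq hδ.le
  rw [hs]
  field_simp
  ring

end Bump

section DotHelpers

variable {m : ℕ}

lemma col_dot_right (u vv w : Fin m → ℝ) (θ N : ℝ) :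
    ∑ t, ((u t + θ * vv t) / N) * w t = (dot u w + θ * dot vv w) / N := by
  have h : ∀ t, ((u t + θ * vv t) / N) * w t
      = (u t * w t) / N + θ * ((vv t * w t) / N) := fun t => by ring
  rw [Finset.sum_congr rfl fun t _ => h t, Finset.sum_add_distrib,
    ← Finset.sum_div, ← Finset.mul_sum, ← Finset.sum_div]
  unfold dot
  ring

lemma col_dot_left (u vv w : Fin m → ℝ) (θ N : ℝ) :
    ∑ t, w t * ((u t + θ * vv t) / N) = (dot u w + θ * dot vv w) / N := by
  rw [← col_dot_right u vv w θ N]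
  exact Finset.sum_congr rfl fun t _ => mul_comm _ _

lemma col_dot_self (u vv : Fin m → ℝ) (θ N : ℝ) :
    ∑ t, ((u t + θ * vv t) / N) * ((u t + θ * vv t) / N)
      = (dot u u + 2 * θ * dot u vv + θ ^ 2 * dot vv vv) / N ^ 2 := by
  have h : ∀ t, ((u t + θ * vv t) / N) * ((u t + θ * vv t) / N)
      = (u t * u t) / N ^ 2 + 2 * θ * ((u t * vv t) / N ^ 2)
        + θ ^ 2 * ((vv t * vv t) / N ^ 2) := fun t => by ring
  rw [Finset.sum_congr rfl fun t _ => h t, Finset.sum_add_distrib,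
    Finset.sum_add_distrib, ← Finset.sum_div, ← Finset.mul_sum, ← Finset.sum_div,
    ← Finset.mul_sum, ← Finset.sum_div]
  unfold dot
  ring

lemma eq_zero_of_sum_sq {w : Fin m → ℝ} (h : ∑ t, w t * w t = 0) : ∀ t, w t = 0 := by
  intro t
  have hterm : ∀ t' ∈ (Finset.univ : Finset (Fin m)), 0 ≤ w t' * w t' :=
    fun t' _ => mul_self_nonneg _
  have := (Finset.sum_eq_zero_iff_of_nonneg hterm).1 h t (Finset.mem_univ t)
  exact mul_self_eq_zero.1 this

end DotHelpers

section ColCurve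

variable {m' : ℕ}

/-- The normalized perturbation of a unit vector `u` in direction `vv ⊥ u`. -/
noncomputable def colfun (u vv : Fin m' → ℝ) (θ : ℝ) : Fin m' → ℝ :=
  fun t => (u t + θ * vv t) / Real.sqrt (1 + θ ^ 2 * dot vv vv)

lemma dot_self_nonneg (vv : Fin m' → ℝ) : 0 ≤ dot vv vv :=
  Finset.sum_nonneg fun t _ => mul_self_nonneg _

lemma colfun_denom_pos (vv : Fin m' → ℝ) (θ : ℝ) : 0 < 1 + θ ^ 2 * dot vv vv := by
  nlinarith [sq_nonneg θ, dot_self_nonneg vv]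

lemma colfun_N_pos (vv : Fin m' → ℝ) (θ : ℝ) :
    0 < Real.sqrt (1 + θ ^ 2 * dot vv vv) :=
  Real.sqrt_pos.2 (colfun_denom_pos vv θ)

lemma colfun_zero (u vv : Fin m' → ℝ) : colfun u vv 0 = u := by
  funext t
  simp [colfun]

lemma colfun_dot_right (u vv w : Fin m' → ℝ) (θ : ℝ) :
    ∑ t, colfun u vv θ t * w t
      = (dot u w + θ * dot vv w) / Real.sqrt (1 + θ ^ 2 * dot vv vv) :=
  col_dot_right u vv w θ _

lemma colfun_dot_left (u vv w : Fin m' → ℝ) (θ : ℝ) :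
    ∑ t, w t * colfun u vv θ t
      = (dot u w + θ * dot vv w) / Real.sqrt (1 + θ ^ 2 * dot vv vv) :=
  col_dot_left u vv w θ _

lemma colfun_dot_self (u vv : Fin m' → ℝ) (hu : dot u u = 1) (hvu : dot u vv = 0)
    (θ : ℝ) : ∑ t, colfun u vv θ t * colfun u vv θ t = 1 := by
  unfold colfun
  rw [col_dot_self, hu, hvu, Real.sq_sqrt (colfun_denom_pos vv θ).le]
  rw [div_eq_one_iff_eq (colfun_denom_pos vv θ).ne']
  ring

lemma colfun_contDiff (u vv : Fin m' → ℝ) : ContDiff ℝ (⊤ : ℕ∞) (colfun u vv) := by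
  refine contDiff_pi.2 fun t => ?_
  exact ContDiff.div (contDiff_const.add (contDiff_id.mul contDiff_const))
    ((contDiff_const.add ((contDiff_id.pow 2).mul contDiff_const)).sqrt
      fun θ => (colfun_denom_pos vv θ).ne')
    fun θ => (colfun_N_pos vv θ).ne'

lemma colfun_continuous (u vv : Fin m' → ℝ) : Continuous (colfun u vv) :=
  (colfun_contDiff u vv).continuous

lemma colfun_hasDerivAt (u vv : Fin m' → ℝ) (t : Fin m') :
    HasDerivAt (fun θ => colfun u vv θ t) (vv t) 0 := by
  have hnum : HasDerivAt (fun θ : ℝ => u t + θ * vv t) (vv t) 0 := by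
    simpa using ((hasDerivAt_id (0 : ℝ)).mul_const (vv t)).const_add (u t)
  have hinner : HasDerivAt (fun θ : ℝ => 1 + θ ^ 2 * dot vv vv) 0 0 := by
    have := (((hasDerivAt_id (0 : ℝ)).pow 2).mul_const (dot vv vv)).const_add (1 : ℝ)
    simpa using this
  have hne : 1 + (0 : ℝ) ^ 2 * dot vv vv ≠ 0 := (colfun_denom_pos vv 0).ne'
  have hsq : HasDerivAt (fun θ : ℝ => Real.sqrt (1 + θ ^ 2 * dot vv vv))
      (1 / (2 * Real.sqrt (1 + (0 : ℝ) ^ 2 * dot vv vv)) * 0) 0 :=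
    (Real.hasDerivAt_sqrt hne).comp 0 hinner
  have hden0 : Real.sqrt (1 + (0 : ℝ) ^ 2 * dot vv vv) ≠ 0 :=
    (colfun_N_pos vv 0).ne'
  have := hnum.fun_div hsq hden0
  convert this using 1
  · rfl
  · rfl
  · rfl
  have hs : Real.sqrt (1 + (0 : ℝ) ^ 2 * dot vv vv) = 1 := by
    simpa using Real.sqrt_one
  rw [hs]
  field_simp
  ring

end ColCurve

/-- Membership in `WsetStar` after updating one factor matrix. -/
lemma mem_WsetStar_update {s : ℕ} {y : PSpace n r} (hy : y ∈ WsetStar s n r)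
    (i : Fin k) (W : Fin r → Fin (n i) → ℝ)
    (hunit : unitCols W) (horthW : (i : ℕ) < s → orthoCols W)
    (hLIW : s ≤ (i : ℕ) → LinearIndependent ℝ W) :
    (Function.update y.1 i W, y.2) ∈ WsetStar s n r := by
  obtain ⟨⟨hfeas, hli⟩, hnz⟩ := mem_WsetStar_iff.1 hy
  refine mem_WsetStar_iff.2
    ⟨⟨⟨(?_ : ∀ i', unitCols (Function.update y.1 i W i')),
       (?_ : ∀ i' : Fin k, (i' : ℕ) < s → orthoCols (Function.update y.1 i W i'))⟩,
      (?_ : ∀ i' : Fin k, s ≤ (i' : ℕ) → LinearIndependent ℝ (Function.update y.1 i W i'))⟩,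
     hnz⟩
  · intro i'
    rcases eq_or_ne i' i with rfl | hi'
    · rw [Function.update_self]; exact hunit
    · rw [Function.update_of_ne hi']; exact hfeas.1 i'
  · intro i' hi's
    rcases eq_or_ne i' i with rfl | hi'
    · rw [Function.update_self]; exact horthW hi's
    · rw [Function.update_of_ne hi']; exact hfeas.2 i' hi's
  · intro i' hi's
    rcases eq_or_ne i' i with rfl | hi'
    · rw [Function.update_self]; exact hLIW hi's
    · rw [Function.update_of_ne hi']; exact hli i' hi's

set_option maxHeartbeats 2000000 in
/-- Step 2: at a critical point the residual contraction pairs to zero against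
any admissible direction `vv` for the column `(i,j)`. -/
lemma crit_column {s : ℕ} (hk : 3 ≤ k) (hs1 : 1 ≤ s) {A : Tensor n} {y : PSpace n r}
    (hy : y ∈ WsetStar s n r) (hcrit : IsCriticalOn (gfun A) (WsetStar s n r) y)
    (i : Fin k) (j : Fin r) (vv : Fin (n i) → ℝ)
    (hvu : dot (y.1 i j) vv = 0)
    (horth : (i : ℕ) < s → ∀ l, dot (y.1 i l) vv = 0) :
    ∑ t, ctr (fun e => A e - phi y e) (fun l => y.1 l j) i t * vv t = 0 := by
  classical
  obtain ⟨⟨hfeas, hli⟩, hnz⟩ := mem_WsetStar_iff.1 hy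
  have hF0 : Function.update (y.1 i) j (colfun (y.1 i j) vv 0) = y.1 i := by
    rw [colfun_zero, Function.update_eq_self]
  -- linear independence control
  have hδex : ∃ δ > 0, ∀ θ : ℝ, |θ| < δ → s ≤ (i : ℕ) →
      LinearIndependent ℝ (Function.update (y.1 i) j (colfun (y.1 i j) vv θ)) := by
    by_cases hcase : (i : ℕ) < s
    · exact ⟨1, one_pos, fun θ _ hi' => absurd hi' (by omega)⟩
    · push_neg at hcase
      have hopen : IsOpen {W : Fin r → Fin (n i) → ℝ | LinearIndependent ℝ W} :=
        isOpen_setOf_linearIndependent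
      have hcont : Continuous
          (fun θ => Function.update (y.1 i) j (colfun (y.1 i j) vv θ)) := by
        refine continuous_pi fun l => ?_
        by_cases hl : l = j
        · rw [hl]
          simp only [Function.update_self]
          exact continuous_pi fun m0 =>
            (continuous_apply m0).comp (colfun_continuous (y.1 i j) vv)
        · simp only [Function.update_of_ne hl]
          exact continuous_const
      have h0mem : Function.update (y.1 i) j (colfun (y.1 i j) vv 0)
          ∈ {W : Fin r → Fin (n i) → ℝ | LinearIndependent ℝ W} := by
        rw [hF0]; exact hli i hcase
      have hpre : IsOpen ((fun θ : ℝ => Function.update (y.1 i) j (colfun (y.1 i j) vv θ))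
          ⁻¹' {W : Fin r → Fin (n i) → ℝ | LinearIndependent ℝ W}) :=
        hopen.preimage hcont
      have h0pre : (0 : ℝ) ∈ (fun θ : ℝ => Function.update (y.1 i) j (colfun (y.1 i j) vv θ))
          ⁻¹' {W : Fin r → Fin (n i) → ℝ | LinearIndependent ℝ W} := h0mem
      obtain ⟨δ, hδpos, hball⟩ := Metric.isOpen_iff.1 hpre 0 h0pre
      refine ⟨δ, hδpos, fun θ hθ _ => ?_⟩
      have := hball (show θ ∈ Metric.ball 0 δ by simpa [Real.dist_eq] using hθ)
      exact this
  obtain ⟨δ, hδpos, hδ⟩ := hδex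
  set v : PSpace n r :=
    (Function.update (0 : Fac n r) i
      (Function.update (0 : Fin r → Fin (n i) → ℝ) j vv), (0 : Fin r → ℝ)) with hv
  -- membership
  have hmem : ∀ t, (Function.update y.1 i
      (Function.update (y.1 i) j (colfun (y.1 i j) vv (bump δ t))), y.2)
      ∈ WsetStar s n r := by
    intro t
    set θ := bump δ t with hθdef
    refine mem_WsetStar_update hy i _ ?_ ?_ (hδ θ (bump_abs_lt hδpos t))
    · intro l
      by_cases hl : l = j
      · rw [hl, Function.update_self]
        exact colfun_dot_self _ _ (hfeas.1 i j) hvu _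
      · rw [Function.update_of_ne hl]
        exact hfeas.1 i l
    · intro hi's
      have hall := horth hi's
      intro l l'
      by_cases hl : l = j <;> by_cases hl' : l' = j
      · rw [hl, hl', if_pos rfl, Function.update_self]
        exact colfun_dot_self _ _ (hfeas.1 i j) hvu _
      · rw [hl, if_neg (fun h : j = l' => hl' h.symm), Function.update_self,
          Function.update_of_ne hl']
        rw [colfun_dot_right]
        have h1 : dot (y.1 i j) (y.1 i l') = 0 := by
          have := hfeas.2 i hi's j l'
          unfold dot
          rw [this, if_neg (fun h : j = l' => hl' h.symm)]
        have h2 : dot vv (y.1 i l') = 0 := by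
          rw [dot_comm]; exact hall l'
        rw [h1, h2]
        simp
      · rw [hl', if_neg (fun h : l = j => hl h), Function.update_self,
          Function.update_of_ne hl]
        rw [colfun_dot_left]
        have h1 : dot (y.1 i j) (y.1 i l) = 0 := by
          have := hfeas.2 i hi's j l
          unfold dot
          rw [this, if_neg (fun h : j = l => hl h.symm)]
        have h2 : dot vv (y.1 i l) = 0 := by
          rw [dot_comm]; exact hall l
        rw [h1, h2]
        simp
      · rw [Function.update_of_ne hl, Function.update_of_ne hl']
        exact hfeas.2 i hi's l l'
  -- base point
  have h0 : (fun t : ℝ => (Function.update y.1 i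
      (Function.update (y.1 i) j (colfun (y.1 i j) vv (bump δ t))), y.2)) 0 = y := by
    show (Function.update y.1 i
      (Function.update (y.1 i) j (colfun (y.1 i j) vv (bump δ 0))), y.2) = y
    rw [bump_zero, hF0, Function.update_eq_self]
  -- smoothness
  have hsm : ContDiff ℝ (⊤ : ℕ∞) (fun t : ℝ => (Function.update y.1 i
      (Function.update (y.1 i) j (colfun (y.1 i j) vv (bump δ t))), y.2)) := by
    refine ContDiff.prodMk ?_ contDiff_const
    refine contDiff_pi.2 fun i' => ?_
    by_cases hi' : i' = i
    · subst hi'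
      simp only [Function.update_self]
      refine contDiff_pi.2 fun l => ?_
      by_cases hl : l = j
      · rw [hl]
        simp only [Function.update_self]
        exact (colfun_contDiff (y.1 i' j) vv).comp (bump_contDiff hδpos)
      · simp only [Function.update_of_ne hl]
        exact contDiff_const
    · simp only [Function.update_of_ne hi']
      exact contDiff_const
  -- derivative
  have hd : HasDerivAt (fun t : ℝ => (Function.update y.1 i
      (Function.update (y.1 i) j (colfun (y.1 i j) vv (bump δ t))), y.2)) v 0 := by
    rw [hv]
    refine HasDerivAt.prodMk ?_ (hasDerivAt_const 0 y.2)
    refine hasDerivAt_pi.2 fun i' => ?_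
    by_cases hi' : i' = i
    · subst hi'
      simp only [Function.update_self]
      refine hasDerivAt_pi.2 fun l => ?_
      by_cases hl : l = j
      · rw [hl]
        simp only [Function.update_self]
        refine hasDerivAt_pi.2 fun m0 => ?_
        have hg : HasDerivAt (fun θ => colfun (y.1 i' j) vv θ m0) (vv m0) (bump δ 0) := by
          rw [bump_zero]; exact colfun_hasDerivAt (y.1 i' j) vv m0
        have hcomp := hg.comp 0 (bump_hasDerivAt hδpos)
        simp only [mul_one] at hcomp
        exact hcomp
      · simp only [Function.update_of_ne hl, Pi.zero_apply]
        exact hasDerivAt_const 0 (y.1 i' l)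
    · simp only [Function.update_of_ne hi', Pi.zero_apply]
      exact hasDerivAt_const 0 (y.1 i')
  -- assemble
  have hpair := crit_pairing hcrit _ v hsm hmem h0 hd
  rw [tdot_dphi] at hpair
  have h1 : ∑ j', v.2 j' * tdot (fun e => A e - phi y e)
      (fun e => ∏ i', y.1 i' j' (e i')) = 0 := by
    refine Finset.sum_eq_zero fun j' _ => ?_
    simp [hv]
  rw [h1, zero_add] at hpair
  have h2 : ∑ j', y.2 j' * ∑ i', ∑ t,
      ctr (fun e => A e - phi y e) (fun l => y.1 l j') i' t * v.1 i' j' t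
      = y.2 j * ∑ t, ctr (fun e => A e - phi y e) (fun l => y.1 l j) i t * vv t := by
    rw [Finset.sum_eq_single j]
    · congr 1
      rw [Finset.sum_eq_single i]
      · refine Finset.sum_congr rfl fun t _ => ?_
        simp [hv]
      · intro i' _ hi'
        refine Finset.sum_eq_zero fun t _ => ?_
        simp [hv, Function.update_of_ne hi']
      · intro h
        exact absurd (Finset.mem_univ i) h
    · intro j' _ hj'
      refine mul_eq_zero_of_right _ ?_
      refine Finset.sum_eq_zero fun i' _ => ?_
      refine Finset.sum_eq_zero fun t _ => ?_
      by_cases hi' : i' = i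
      · subst hi'
        simp [hv, Function.update_of_ne hj']
      · simp [hv, Function.update_of_ne hi']
    · intro h
      exact absurd (Finset.mem_univ j) h
  rw [h2] at hpair
  rcases mul_eq_zero.1 hpair with h | h
  · exact absurd h (hnz j)
  · exact h

lemma orthoCols_unitCols {m' r' : ℕ} {U : Fin r' → Fin m' → ℝ} (h : orthoCols U) :
    unitCols U := fun j => by
  have := h j j
  rwa [if_pos rfl] at this

section DotComb

variable {m' : ℕ}

lemma dot_comb_left (p q w : Fin m' → ℝ) (α β : ℝ) :
    ∑ t, (α * p t + β * q t) * w t = α * dot p w + β * dot q w := by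
  unfold dot
  rw [Finset.mul_sum, Finset.mul_sum, ← Finset.sum_add_distrib]
  exact Finset.sum_congr rfl fun t _ => by ring

lemma dot_comb_right (p q w : Fin m' → ℝ) (α β : ℝ) :
    ∑ t, w t * (α * p t + β * q t) = α * dot p w + β * dot q w := by
  rw [← dot_comb_left p q w α β]
  exact Finset.sum_congr rfl fun t _ => by ring

lemma dot_comb_both (p q p' q' : Fin m' → ℝ) (α β α' β' : ℝ) :
    ∑ t, (α * p t + β * q t) * (α' * p' t + β' * q' t)
      = α * α' * dot p p' + α * β' * dot p q' + β * α' * dot q p' + β * β' * dot q q' := by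
  unfold dot
  rw [Finset.mul_sum, Finset.mul_sum, Finset.mul_sum, Finset.mul_sum,
    ← Finset.sum_add_distrib, ← Finset.sum_add_distrib, ← Finset.sum_add_distrib]
  exact Finset.sum_congr rfl fun t _ => by ring

end DotComb

section Rot

variable {m' : ℕ}

/-- First rotated column. -/
noncomputable def rotA (p q : Fin m' → ℝ) (t : ℝ) : Fin m' → ℝ :=
  fun m => Real.cos t * p m + Real.sin t * q m

/-- Second rotated column. -/
noncomputable def rotB (p q : Fin m' → ℝ) (t : ℝ) : Fin m' → ℝ :=
  fun m => -Real.sin t * p m + Real.cos t * q m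

lemma rotA_zero (p q : Fin m' → ℝ) : rotA p q 0 = p := by
  funext m; simp [rotA]

lemma rotB_zero (p q : Fin m' → ℝ) : rotB p q 0 = q := by
  funext m; simp [rotB]

lemma rotA_contDiff (p q : Fin m' → ℝ) : ContDiff ℝ (⊤ : ℕ∞) (rotA p q) :=
  contDiff_pi.2 fun m => (Real.contDiff_cos.mul contDiff_const).add
    (Real.contDiff_sin.mul contDiff_const)

lemma rotB_contDiff (p q : Fin m' → ℝ) : ContDiff ℝ (⊤ : ℕ∞) (rotB p q) :=
  contDiff_pi.2 fun m => ((Real.contDiff_sin.neg).mul contDiff_const).add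
    (Real.contDiff_cos.mul contDiff_const)

lemma rotA_hasDerivAt (p q : Fin m' → ℝ) (m : Fin m') :
    HasDerivAt (fun t => rotA p q t m) (q m) 0 := by
  have := ((Real.hasDerivAt_cos 0).mul_const (p m)).fun_add
    ((Real.hasDerivAt_sin 0).mul_const (q m))
  simpa [rotA] using this

lemma rotB_hasDerivAt (p q : Fin m' → ℝ) (m : Fin m') :
    HasDerivAt (fun t => rotB p q t m) (-(p m)) 0 := by
  have := (((Real.hasDerivAt_sin 0).neg).mul_const (p m)).fun_add
    ((Real.hasDerivAt_cos 0).mul_const (q m))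
  simpa [rotB] using this

end Rot

set_option maxHeartbeats 2000000 in
/-- Step 3: Givens-rotation curves give the symmetry relation for orthonormal factors. -/
lemma crit_givens {s : ℕ} (hk : 3 ≤ k) (hs1 : 1 ≤ s) {A : Tensor n} {y : PSpace n r}
    (hy : y ∈ WsetStar s n r) (hcrit : IsCriticalOn (gfun A) (WsetStar s n r) y)
    (i : Fin k) (his : (i : ℕ) < s) (a b : Fin r) (hab : a ≠ b) :
    y.2 a * ∑ t, ctr (fun e => A e - phi y e) (fun l => y.1 l a) i t * y.1 i b t
      = y.2 b * ∑ t, ctr (fun e => A e - phi y e) (fun l => y.1 l b) i t * y.1 i a t := by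
  classical
  obtain ⟨⟨hfeas, hli⟩, hnz⟩ := mem_WsetStar_iff.1 hy
  have hba : b ≠ a := hab.symm
  have horig := hfeas.2 i his
  have pyth : ∀ t : ℝ, Real.sin t * Real.sin t + Real.cos t * Real.cos t = 1 := by
    intro t
    have := Real.sin_sq_add_cos_sq t
    nlinarith [this]
  have daa : dot (y.1 i a) (y.1 i a) = 1 := by
    have := horig a a; unfold dot; rw [this, if_pos rfl]
  have dbb : dot (y.1 i b) (y.1 i b) = 1 := by
    have := horig b b; unfold dot; rw [this, if_pos rfl]
  have dab : dot (y.1 i a) (y.1 i b) = 0 := by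
    have := horig a b; unfold dot; rw [this, if_neg hab]
  have dba : dot (y.1 i b) (y.1 i a) = 0 := by
    have := horig b a; unfold dot; rw [this, if_neg hba]
  have dother : ∀ l, l ≠ a → dot (y.1 i a) (y.1 i l) = 0 := by
    intro l hl
    have := horig a l; unfold dot; rw [this, if_neg (fun h : a = l => hl h.symm)]
  have dotherb : ∀ l, l ≠ b → dot (y.1 i b) (y.1 i l) = 0 := by
    intro l hl
    have := horig b l; unfold dot; rw [this, if_neg (fun h : b = l => hl h.symm)]
  -- the orthonormality of the rotated family
  have horthW : ∀ t : ℝ, orthoCols (Function.update (Function.update (y.1 i) a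
      (rotA (y.1 i a) (y.1 i b) t)) b (rotB (y.1 i a) (y.1 i b) t)) := by
    intro t l l'
    have hWb : Function.update (Function.update (y.1 i) a
        (rotA (y.1 i a) (y.1 i b) t)) b (rotB (y.1 i a) (y.1 i b) t) b
        = rotB (y.1 i a) (y.1 i b) t := Function.update_self _ _ _
    have hWa : Function.update (Function.update (y.1 i) a
        (rotA (y.1 i a) (y.1 i b) t)) b (rotB (y.1 i a) (y.1 i b) t) a
        = rotA (y.1 i a) (y.1 i b) t := by
      rw [Function.update_of_ne hab, Function.update_self]
    have hWo : ∀ l0, l0 ≠ a → l0 ≠ b → Function.update (Function.update (y.1 i) a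
        (rotA (y.1 i a) (y.1 i b) t)) b (rotB (y.1 i a) (y.1 i b) t) l0
        = y.1 i l0 := by
      intro l0 h1 h2
      rw [Function.update_of_ne h2, Function.update_of_ne h1]
    by_cases hlb : l = b
    · rw [hlb]
      by_cases hlb' : l' = b
      · rw [hlb', if_pos rfl, hWb]
        show ∑ m, rotB (y.1 i a) (y.1 i b) t m * rotB (y.1 i a) (y.1 i b) t m = 1
        unfold rotB
        rw [dot_comb_both, daa, dab, dba, dbb]
        nlinarith [pyth t]
      · by_cases hla' : l' = a
        · rw [hla', if_neg hba, hWb, hWa]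
          show ∑ m, rotB (y.1 i a) (y.1 i b) t m * rotA (y.1 i a) (y.1 i b) t m = 0
          unfold rotA rotB
          rw [dot_comb_both, daa, dab, dba, dbb]
          ring
        · rw [if_neg (fun h : b = l' => hlb' h.symm), hWb, hWo l' hla' hlb']
          show ∑ m, rotB (y.1 i a) (y.1 i b) t m * y.1 i l' m = 0
          unfold rotB
          rw [dot_comb_left, dother l' hla', dotherb l' hlb']
          ring
    · by_cases hla : l = a
      · rw [hla]
        by_cases hlb' : l' = b
        · rw [hlb', if_neg hab, hWa, hWb]
          show ∑ m, rotA (y.1 i a) (y.1 i b) t m * rotB (y.1 i a) (y.1 i b) t m = 0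
          unfold rotA rotB
          rw [dot_comb_both, daa, dab, dba, dbb]
          ring
        · by_cases hla' : l' = a
          · rw [hla', if_pos rfl, hWa]
            show ∑ m, rotA (y.1 i a) (y.1 i b) t m * rotA (y.1 i a) (y.1 i b) t m = 1
            unfold rotA
            rw [dot_comb_both, daa, dab, dba, dbb]
            nlinarith [pyth t]
          · rw [if_neg (fun h : a = l' => hla' h.symm), hWa, hWo l' hla' hlb']
            show ∑ m, rotA (y.1 i a) (y.1 i b) t m * y.1 i l' m = 0
            unfold rotA
            rw [dot_comb_left, dother l' hla', dotherb l' hlb']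
            ring
      · rw [hWo l hla hlb]
        by_cases hlb' : l' = b
        · rw [hlb', if_neg hlb, hWb]
          show ∑ m, y.1 i l m * rotB (y.1 i a) (y.1 i b) t m = 0
          unfold rotB
          rw [dot_comb_right, dother l hla, dotherb l hlb]
          ring
        · by_cases hla' : l' = a
          · rw [hla', if_neg hla, hWa]
            show ∑ m, y.1 i l m * rotA (y.1 i a) (y.1 i b) t m = 0
            unfold rotA
            rw [dot_comb_right, dother l hla, dotherb l hlb]
            ring
          · rw [hWo l' hla' hlb']
            exact horig l l'
  -- membership
  have hmem : ∀ t : ℝ, (Function.update y.1 i (Function.update (Function.update (y.1 i) a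
      (rotA (y.1 i a) (y.1 i b) t)) b (rotB (y.1 i a) (y.1 i b) t)), y.2)
      ∈ WsetStar s n r := by
    intro t
    refine mem_WsetStar_update hy i _ (orthoCols_unitCols (horthW t)) (fun _ => horthW t)
      (fun h => absurd h (by omega))
  -- base point
  have h0 : (fun t : ℝ => (Function.update y.1 i (Function.update (Function.update (y.1 i) a
      (rotA (y.1 i a) (y.1 i b) t)) b (rotB (y.1 i a) (y.1 i b) t)), y.2)) 0 = y := by
    show (Function.update y.1 i (Function.update (Function.update (y.1 i) a
      (rotA (y.1 i a) (y.1 i b) 0)) b (rotB (y.1 i a) (y.1 i b) 0)), y.2) = y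
    rw [rotA_zero, rotB_zero]
    rw [show y.1 i b = Function.update (y.1 i) a (y.1 i a) b from
      (Function.update_of_ne hba _ _).symm]
    rw [Function.update_eq_self, Function.update_eq_self, Function.update_eq_self]
  -- direction
  set v : PSpace n r :=
    (Function.update (0 : Fac n r) i
      (Function.update (Function.update (0 : Fin r → Fin (n i) → ℝ) a (y.1 i b)) b
        (fun m => -(y.1 i a m))), (0 : Fin r → ℝ)) with hv
  -- smoothness
  have hsm : ContDiff ℝ (⊤ : ℕ∞) (fun t : ℝ => (Function.update y.1 i
      (Function.update (Function.update (y.1 i) a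
        (rotA (y.1 i a) (y.1 i b) t)) b (rotB (y.1 i a) (y.1 i b) t)), y.2)) := by
    refine ContDiff.prodMk ?_ contDiff_const
    refine contDiff_pi.2 fun i' => ?_
    by_cases hi' : i' = i
    · subst hi'
      simp only [Function.update_self]
      refine contDiff_pi.2 fun l => ?_
      by_cases hlb : l = b
      · rw [hlb]
        simp only [Function.update_self]
        exact rotB_contDiff _ _
      · simp only [Function.update_of_ne hlb]
        by_cases hla : l = a
        · rw [hla]
          simp only [Function.update_self]
          exact rotA_contDiff _ _
        · simp only [Function.update_of_ne hla]
          exact contDiff_const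
    · simp only [Function.update_of_ne hi']
      exact contDiff_const
  -- derivative
  have hd : HasDerivAt (fun t : ℝ => (Function.update y.1 i
      (Function.update (Function.update (y.1 i) a
        (rotA (y.1 i a) (y.1 i b) t)) b (rotB (y.1 i a) (y.1 i b) t)), y.2)) v 0 := by
    rw [hv]
    refine HasDerivAt.prodMk ?_ (hasDerivAt_const 0 y.2)
    refine hasDerivAt_pi.2 fun i' => ?_
    by_cases hi' : i' = i
    · subst hi'
      simp only [Function.update_self]
      refine hasDerivAt_pi.2 fun l => ?_
      by_cases hlb : l = b
      · rw [hlb]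
        simp only [Function.update_self]
        exact hasDerivAt_pi.2 fun m => rotB_hasDerivAt _ _ m
      · simp only [Function.update_of_ne hlb]
        by_cases hla : l = a
        · rw [hla]
          simp only [Function.update_self]
          exact hasDerivAt_pi.2 fun m => rotA_hasDerivAt _ _ m
        · simp only [Function.update_of_ne hla, Pi.zero_apply]
          exact hasDerivAt_const 0 (y.1 i' l)
    · simp only [Function.update_of_ne hi', Pi.zero_apply]
      exact hasDerivAt_const 0 (y.1 i')
  -- assemble
  have hpair := crit_pairing hcrit _ v hsm hmem h0 hd
  rw [tdot_dphi] at hpair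
  have h1 : ∑ j', v.2 j' * tdot (fun e => A e - phi y e)
      (fun e => ∏ i', y.1 i' j' (e i')) = 0 := by
    refine Finset.sum_eq_zero fun j' _ => ?_
    simp [hv]
  rw [h1, zero_add] at hpair
  have hvala : v.1 i a = y.1 i b := by
    rw [hv]
    show Function.update (0 : Fac n r) i _ i a = _
    rw [Function.update_self, Function.update_of_ne hab, Function.update_self]
  have hvalb : v.1 i b = fun m => -(y.1 i a m) := by
    rw [hv]
    show Function.update (0 : Fac n r) i _ i b = _
    rw [Function.update_self, Function.update_self]
  have hvalo : ∀ l, l ≠ a → l ≠ b → v.1 i l = 0 := by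
    intro l h1' h2'
    rw [hv]
    show Function.update (0 : Fac n r) i _ i l = _
    rw [Function.update_self, Function.update_of_ne h2', Function.update_of_ne h1']
    rfl
  have hvali' : ∀ i', i' ≠ i → v.1 i' = 0 := by
    intro i' hi'
    rw [hv]
    show Function.update (0 : Fac n r) i _ i' = _
    rw [Function.update_of_ne hi']
    rfl
  have h2 : ∑ j', y.2 j' * ∑ i', ∑ t,
      ctr (fun e => A e - phi y e) (fun l => y.1 l j') i' t * v.1 i' j' t
      = y.2 a * ∑ t, ctr (fun e => A e - phi y e) (fun l => y.1 l a) i t * y.1 i b t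
        + y.2 b * ∑ t, ctr (fun e => A e - phi y e) (fun l => y.1 l b) i t
            * (-(y.1 i a t)) := by
    have hstep : ∀ j', y.2 j' * ∑ i', ∑ t,
        ctr (fun e => A e - phi y e) (fun l => y.1 l j') i' t * v.1 i' j' t
        = (if j' = a then y.2 a * ∑ t, ctr (fun e => A e - phi y e)
            (fun l => y.1 l a) i t * y.1 i b t else 0)
          + (if j' = b then y.2 b * ∑ t, ctr (fun e => A e - phi y e)
              (fun l => y.1 l b) i t * (-(y.1 i a t)) else 0) := by
      intro j'
      have hinner : ∀ j0 : Fin r, ∑ i', ∑ t, ctr (fun e => A e - phi y e)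
          (fun l => y.1 l j0) i' t * v.1 i' j0 t
          = ∑ t, ctr (fun e => A e - phi y e) (fun l => y.1 l j0) i t * v.1 i j0 t := by
        intro j0
        rw [Finset.sum_eq_single i]
        · intro i' _ hi'
          refine Finset.sum_eq_zero fun t _ => ?_
          rw [hvali' i' hi']
          simp
        · intro h
          exact absurd (Finset.mem_univ i) h
      rw [hinner j']
      by_cases hja : j' = a
      · rw [hja, if_pos rfl, if_neg hab]
        rw [add_zero]
        congr 1
        refine Finset.sum_congr rfl fun t _ => ?_
        rw [hvala]
      · by_cases hjb : j' = b
        · rw [hjb, if_neg hba, if_pos rfl, zero_add]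
          congr 1
          refine Finset.sum_congr rfl fun t _ => ?_
          rw [hvalb]
        · rw [if_neg hja, if_neg hjb, add_zero]
          refine mul_eq_zero_of_right _ (Finset.sum_eq_zero fun t _ => ?_)
          rw [hvalo j' hja hjb]
          simp
    rw [Finset.sum_congr rfl fun j' _ => hstep j', Finset.sum_add_distrib]
    congr 1
    · rw [Finset.sum_ite_eq' Finset.univ a]
      rw [if_pos (Finset.mem_univ a)]
    · rw [Finset.sum_ite_eq' Finset.univ b]
      rw [if_pos (Finset.mem_univ b)]
  rw [h2] at hpair
  have h3 : y.2 b * ∑ t, ctr (fun e => A e - phi y e) (fun l => y.1 l b) i t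
      * (-(y.1 i a t)) = -(y.2 b * ∑ t, ctr (fun e => A e - phi y e)
        (fun l => y.1 l b) i t * y.1 i a t) := by
    rw [← mul_neg, ← Finset.sum_neg_distrib]
    congr 1
    exact Finset.sum_congr rfl fun t _ => by ring
  rw [h3] at hpair
  linarith

section TangentConstraints

variable {s : ℕ} {γ : ℝ → PSpace n r} {v : PSpace n r}

/-- Differentiating the unit-norm constraint along a feasible curve. -/
lemma curve_unit_dot (hmem : ∀ t, γ t ∈ WsetStar s n r) (hd : HasDerivAt γ v 0)
    (i : Fin k) (j : Fin r) : ∑ m, (γ 0).1 i j m * v.1 i j m = 0 := by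
  have hder : HasDerivAt (fun t => ∑ m, (γ t).1 i j m * (γ t).1 i j m)
      (∑ m, (v.1 i j m * (γ 0).1 i j m + (γ 0).1 i j m * v.1 i j m)) 0 :=
    HasDerivAt.fun_sum fun m _ =>
      (hasDerivAt_coord1 hd i j m).mul (hasDerivAt_coord1 hd i j m)
  have hconst : ∀ t, (∑ m, (γ t).1 i j m * (γ t).1 i j m) = 1 := fun t =>
    (mem_WsetStar_iff.1 (hmem t)).1.1.1 i j
  have hz := hasDerivAt_const_curve hconst hder
  have hsplit : ∑ m, (v.1 i j m * (γ 0).1 i j m + (γ 0).1 i j m * v.1 i j m)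
      = 2 * ∑ m, (γ 0).1 i j m * v.1 i j m := by
    rw [Finset.mul_sum]
    exact Finset.sum_congr rfl fun m _ => by ring
  rw [hsplit] at hz
  linarith

/-- Differentiating the orthogonality constraints along a feasible curve. -/
lemma curve_orth_dot (hmem : ∀ t, γ t ∈ WsetStar s n r) (hd : HasDerivAt γ v 0)
    (i : Fin k) (his : (i : ℕ) < s) (j j' : Fin r) :
    ∑ m, (γ 0).1 i j m * v.1 i j' m = -∑ m, (γ 0).1 i j' m * v.1 i j m := by
  have hder : HasDerivAt (fun t => ∑ m, (γ t).1 i j m * (γ t).1 i j' m)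
      (∑ m, (v.1 i j m * (γ 0).1 i j' m + (γ 0).1 i j m * v.1 i j' m)) 0 :=
    HasDerivAt.fun_sum fun m _ =>
      (hasDerivAt_coord1 hd i j m).mul (hasDerivAt_coord1 hd i j' m)
  have hconst : ∀ t, (∑ m, (γ t).1 i j m * (γ t).1 i j' m)
      = if j = j' then (1 : ℝ) else 0 := fun t =>
    (mem_WsetStar_iff.1 (hmem t)).1.1.2 i his j j'
  have hz := hasDerivAt_const_curve hconst hder
  rw [Finset.sum_add_distrib] at hz
  have hcomm : ∑ m, v.1 i j m * (γ 0).1 i j' m = ∑ m, (γ 0).1 i j' m * v.1 i j m :=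
    Finset.sum_congr rfl fun m _ => mul_comm _ _
  rw [hcomm] at hz
  linarith

end TangentConstraints

end Aux

/-- Proposition: critical points are KKT points.
A point `(U, x) ∈ W_{n,r,∗}` is a critical point of `g(U,x) = ½‖A − φ(U,x)‖²` on the
manifold `W_{n,r,∗}` if and only if `(U, diag_k x)` is a KKT point of (LRPOTA). -/
theorem critical_iff_kkt
    (k s r : ℕ) (n : Fin k → ℕ) (hk : 3 ≤ k) (hs1 : 1 ≤ s) (hsk : s ≤ k)
    (hr : ∀ i : Fin k, r ≤ n i)
    (A : Tensor n) (y : PSpace n r) (hy : y ∈ WsetStar s n r) :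
    IsCriticalOn (gfun A) (WsetStar s n r) y ↔ IsKKT s A y.1 y.2 := by
  classical
  obtain ⟨⟨hfeas, hli⟩, hnz⟩ := mem_WsetStar_iff.1 hy
  constructor
  · intro hcrit
    have hlam : ∀ j, y.2 j = lamOf A y.1 j := fun j => crit_lam hk hs1 hy hcrit j
    have hresR : ∀ j, tdot (fun e => A e - phi y e) (fun e => ∏ i, y.1 i j (e i)) = 0 := by
      intro j
      rw [tdot_res_rank1 s hk hs1 A y hfeas j, ← hlam j, sub_self]
    have hctrcol : ∀ (i : Fin k) (j : Fin r),
        ∑ t, ctr (fun e => A e - phi y e) (fun l => y.1 l j) i t * y.1 i j t = 0 := by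
      intro i j
      rw [ctr_dot_col]
      exact hresR j
    refine ⟨hfeas, hlam, ?_, ?_⟩
    · -- orthonormal factors
      intro i his
      have horig := hfeas.2 i his
      have hudot : ∀ l0 l : Fin r, dot (y.1 i l0) (y.1 i l)
          = if l0 = l then (1 : ℝ) else 0 := fun l0 l => horig l0 l
      -- representation of the residual contraction in the column span
      have hrep : ∀ (j : Fin r) (t0 : Fin (n i)),
          ctr (fun e => A e - phi y e) (fun l => y.1 l j) i t0
          = ∑ l, (∑ t, ctr (fun e => A e - phi y e) (fun l' => y.1 l' j) i t
              * y.1 i l t) * y.1 i l t0 := by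
        intro j t0
        have hworth : ∀ l0 : Fin r, dot (y.1 i l0)
            (fun t0 => ctr (fun e => A e - phi y e) (fun l => y.1 l j) i t0
              - ∑ l, (∑ t, ctr (fun e => A e - phi y e) (fun l' => y.1 l' j) i t
                  * y.1 i l t) * y.1 i l t0) = 0 := by
          intro l0
          unfold dot
          have hexp : ∀ t1, y.1 i l0 t1 * (ctr (fun e => A e - phi y e)
              (fun l => y.1 l j) i t1
              - ∑ l, (∑ t, ctr (fun e => A e - phi y e) (fun l' => y.1 l' j) i t
                  * y.1 i l t) * y.1 i l t1)
              = ctr (fun e => A e - phi y e) (fun l => y.1 l j) i t1 * y.1 i l0 t1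
                - ∑ l, (∑ t, ctr (fun e => A e - phi y e) (fun l' => y.1 l' j) i t
                    * y.1 i l t) * (y.1 i l0 t1 * y.1 i l t1) := by
            intro t1
            rw [mul_sub, Finset.mul_sum]
            congr 1
            · ring
            · exact Finset.sum_congr rfl fun l _ => by ring
          rw [Finset.sum_congr rfl fun t1 _ => hexp t1, Finset.sum_sub_distrib]
          rw [Finset.sum_comm]
          have hinner : ∀ l : Fin r, (∑ t1, (∑ t, ctr (fun e => A e - phi y e)
              (fun l' => y.1 l' j) i t * y.1 i l t) * (y.1 i l0 t1 * y.1 i l t1))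
              = (∑ t, ctr (fun e => A e - phi y e) (fun l' => y.1 l' j) i t
                  * y.1 i l t) * (if l0 = l then (1:ℝ) else 0) := by
            intro l
            rw [← Finset.mul_sum]
            congr 1
            exact hudot l0 l
          rw [Finset.sum_congr rfl fun l _ => hinner l]
          have hcollapse : ∑ l, (∑ t, ctr (fun e => A e - phi y e)
              (fun l' => y.1 l' j) i t * y.1 i l t) * (if l0 = l then (1:ℝ) else 0)
              = ∑ t, ctr (fun e => A e - phi y e) (fun l' => y.1 l' j) i t
                  * y.1 i l0 t := by
            rw [Finset.sum_congr rfl (fun l _ => by rw [mul_ite, mul_one, mul_zero]),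
              Finset.sum_ite_eq]
            rw [if_pos (Finset.mem_univ l0)]
          rw [hcollapse]
          ring
        have hpair := crit_column hk hs1 hy hcrit i j _ (hworth j) (fun _ => hworth)
        have hQw : ∑ t1, (∑ l, (∑ t, ctr (fun e => A e - phi y e)
            (fun l' => y.1 l' j) i t * y.1 i l t) * y.1 i l t1)
            * (ctr (fun e => A e - phi y e) (fun l => y.1 l j) i t1
              - ∑ l, (∑ t, ctr (fun e => A e - phi y e) (fun l' => y.1 l' j) i t
                  * y.1 i l t) * y.1 i l t1) = 0 := by
          have hswap : ∀ t1, (∑ l, (∑ t, ctr (fun e => A e - phi y e)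
              (fun l' => y.1 l' j) i t * y.1 i l t) * y.1 i l t1)
              * (ctr (fun e => A e - phi y e) (fun l => y.1 l j) i t1
                - ∑ l, (∑ t, ctr (fun e => A e - phi y e) (fun l' => y.1 l' j) i t
                    * y.1 i l t) * y.1 i l t1)
              = ∑ l, (∑ t, ctr (fun e => A e - phi y e) (fun l' => y.1 l' j) i t
                  * y.1 i l t) * (y.1 i l t1 * (ctr (fun e => A e - phi y e)
                    (fun l => y.1 l j) i t1
                  - ∑ l, (∑ t, ctr (fun e => A e - phi y e) (fun l' => y.1 l' j) i t
                      * y.1 i l t) * y.1 i l t1)) := by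
            intro t1
            rw [Finset.sum_mul]
            exact Finset.sum_congr rfl fun l _ => by ring
          rw [Finset.sum_congr rfl fun t1 _ => hswap t1, Finset.sum_comm]
          refine Finset.sum_eq_zero fun l _ => ?_
          rw [← Finset.mul_sum]
          refine mul_eq_zero_of_right _ ?_
          exact hworth l
        have hww : ∑ t1, (ctr (fun e => A e - phi y e) (fun l => y.1 l j) i t1
            - ∑ l, (∑ t, ctr (fun e => A e - phi y e) (fun l' => y.1 l' j) i t
                * y.1 i l t) * y.1 i l t1)
            * (ctr (fun e => A e - phi y e) (fun l => y.1 l j) i t1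
              - ∑ l, (∑ t, ctr (fun e => A e - phi y e) (fun l' => y.1 l' j) i t
                  * y.1 i l t) * y.1 i l t1) = 0 := by
          have hsplit : ∀ t1, (ctr (fun e => A e - phi y e) (fun l => y.1 l j) i t1
              - ∑ l, (∑ t, ctr (fun e => A e - phi y e) (fun l' => y.1 l' j) i t
                  * y.1 i l t) * y.1 i l t1)
              * (ctr (fun e => A e - phi y e) (fun l => y.1 l j) i t1
                - ∑ l, (∑ t, ctr (fun e => A e - phi y e) (fun l' => y.1 l' j) i t
                    * y.1 i l t) * y.1 i l t1)
              = ctr (fun e => A e - phi y e) (fun l => y.1 l j) i t1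
                  * (ctr (fun e => A e - phi y e) (fun l => y.1 l j) i t1
                    - ∑ l, (∑ t, ctr (fun e => A e - phi y e) (fun l' => y.1 l' j) i t
                        * y.1 i l t) * y.1 i l t1)
                - (∑ l, (∑ t, ctr (fun e => A e - phi y e) (fun l' => y.1 l' j) i t
                    * y.1 i l t) * y.1 i l t1)
                  * (ctr (fun e => A e - phi y e) (fun l => y.1 l j) i t1
                    - ∑ l, (∑ t, ctr (fun e => A e - phi y e) (fun l' => y.1 l' j) i t
                        * y.1 i l t) * y.1 i l t1) := fun t1 => by ring
          rw [Finset.sum_congr rfl fun t1 _ => hsplit t1, Finset.sum_sub_distrib,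
            hpair, hQw, sub_zero]
        have := eq_zero_of_sum_sq hww t0
        linarith [this]
      -- the multiplier matrix
      refine ⟨Matrix.of (fun l j => (∑ t, ctr (fun e => A e - phi y e)
          (fun l' => y.1 l' j) i t * y.1 i l t) * y.2 j
          + y.2 l * y.2 j * ∏ m ∈ Finset.univ.erase i, (∑ a, y.1 m l a * y.1 m j a)),
        ?_, ?_⟩
      · -- symmetry
        refine Matrix.IsSymm.ext fun l j => ?_
        simp only [Matrix.of_apply]
        have hG : (∏ m ∈ Finset.univ.erase i, (∑ a, y.1 m j a * y.1 m l a))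
            = ∏ m ∈ Finset.univ.erase i, (∑ a, y.1 m l a * y.1 m j a) := by
          refine Finset.prod_congr rfl fun m _ => ?_
          exact Finset.sum_congr rfl fun a _ => mul_comm _ _
        rw [hG]
        by_cases hlj : l = j
        · rw [hlj]
        · have hgiv := crit_givens hk hs1 hy hcrit i his l j hlj
          ring_nf
          ring_nf at hgiv
          linarith [hgiv]
      · -- stationarity
        intro j t0
        have hctrA : ctr A (fun l => y.1 l j) i t0
            = ctr (fun e => A e - phi y e) (fun l => y.1 l j) i t0
              + ctr (phi y) (fun l => y.1 l j) i t0 := by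
          rw [ctr_sub]
          ring
        rw [hctrA, hrep j t0, ctr_phi y j i t0]
        rw [← Finset.sum_add_distrib, Finset.sum_mul]
        refine Finset.sum_congr rfl fun l _ => ?_
        simp only [Matrix.of_apply]
        ring
    · -- oblique factors
      refine ⟨fun j => y.2 j * y.2 j, ?_⟩
      intro i hi j t0
      have hvu : dot (y.1 i j)
          (fun t1 => ctr (fun e => A e - phi y e) (fun l => y.1 l j) i t1) = 0 := by
        unfold dot
        rw [← hctrcol i j]
        exact Finset.sum_congr rfl fun t _ => mul_comm _ _
      have hpair := crit_column hk hs1 hy hcrit i j _ hvu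
        (fun h => absurd h (by omega))
      have hcz := eq_zero_of_sum_sq hpair
      have hAphi : ctr A (fun l => y.1 l j) i t0
          = ctr (phi y) (fun l => y.1 l j) i t0 := by
        have h1 := ctr_sub A (phi y) (fun l => y.1 l j) i t0
        have h2 := hcz t0
        rw [h1] at h2
        linarith
      rw [hAphi, ctr_phi_orth hk s hs1 y hfeas j i hi t0]
      ring
  · intro hkkt
    obtain ⟨hfeas', hlam, hPorth, p, hpspec⟩ := hkkt
    refine ⟨hy, ?_⟩
    intro γ hγ hmemγ h0
    have hdiff : HasDerivAt γ (deriv γ 0) 0 :=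
      ((hγ.differentiable (by simp)) 0).hasDerivAt
    have hder := hasDerivAt_g_comp A hdiff
    rw [h0] at hder
    have hderiv : deriv (gfun A ∘ γ) 0
        = -(tdot (fun e => A e - phi y e) (dphi y (deriv γ 0))) := hder.deriv
    rw [hderiv, neg_eq_zero, tdot_dphi]
    -- tangent constraints
    have hunit : ∀ (i : Fin k) (j : Fin r),
        ∑ m, y.1 i j m * (deriv γ 0).1 i j m = 0 := by
      intro i j
      have := curve_unit_dot hmemγ hdiff i j
      rwa [h0] at this
    have hskew : ∀ (i : Fin k), (i : ℕ) < s → ∀ j j' : Fin r,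
        ∑ m, y.1 i j m * (deriv γ 0).1 i j' m
          = -∑ m, y.1 i j' m * (deriv γ 0).1 i j m := by
      intro i his j j'
      have := curve_orth_dot hmemγ hdiff i his j j'
      rwa [h0] at this
    -- first sum vanishes
    have h1 : ∑ j, (deriv γ 0).2 j * tdot (fun e => A e - phi y e)
        (fun e => ∏ i, y.1 i j (e i)) = 0 := by
      refine Finset.sum_eq_zero fun j _ => ?_
      rw [tdot_res_rank1 s hk hs1 A y hfeas j, ← hlam j, sub_self, mul_zero]
    rw [h1, zero_add]
    -- second sum: reorganize by factor
    have hswap : ∑ j, y.2 j * ∑ i, ∑ t, ctr (fun e => A e - phi y e)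
        (fun l => y.1 l j) i t * (deriv γ 0).1 i j t
        = ∑ i, ∑ j, y.2 j * ∑ t, ctr (fun e => A e - phi y e)
          (fun l => y.1 l j) i t * (deriv γ 0).1 i j t := by
      rw [← Finset.sum_comm]
      exact Finset.sum_congr rfl fun j _ => Finset.mul_sum _ _ _
    rw [hswap]
    refine Finset.sum_eq_zero fun i _ => ?_
    by_cases hcase : (i : ℕ) < s
    · -- orthonormal factor
      obtain ⟨P, hPsym, hPst⟩ := hPorth i hcase
      have hterm : ∀ (j : Fin r) (t : Fin (n i)),
          y.2 j * (ctr (fun e => A e - phi y e) (fun l => y.1 l j) i t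
            * (deriv γ 0).1 i j t)
          = ∑ l, (P l j - y.2 l * y.2 j
              * ∏ m ∈ Finset.univ.erase i, (∑ a, y.1 m l a * y.1 m j a))
            * (y.1 i l t * (deriv γ 0).1 i j t) := by
        intro j t
        have hsub := ctr_sub A (phi y) (fun l => y.1 l j) i t
        have hphi := ctr_phi y j i t
        have hA := hPst j t
        rw [hsub, hphi]
        have hstep1 : y.2 j * ((ctr A (fun l => y.1 l j) i t
            - ∑ l, y.2 l * (y.1 i l t
              * ∏ m ∈ Finset.univ.erase i, (∑ a, y.1 m l a * y.1 m j a)))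
            * (deriv γ 0).1 i j t)
            = (ctr A (fun l => y.1 l j) i t * y.2 j) * (deriv γ 0).1 i j t
              - y.2 j * ((∑ l, y.2 l * (y.1 i l t
                * ∏ m ∈ Finset.univ.erase i, (∑ a, y.1 m l a * y.1 m j a)))
                * (deriv γ 0).1 i j t) := by ring
        rw [hstep1, hA, Finset.sum_mul]
        have hstep2 : y.2 j * ((∑ l, y.2 l * (y.1 i l t
            * ∏ m ∈ Finset.univ.erase i, (∑ a, y.1 m l a * y.1 m j a)))
            * (deriv γ 0).1 i j t)
            = ∑ l, (y.2 l * y.2 j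
              * ∏ m ∈ Finset.univ.erase i, (∑ a, y.1 m l a * y.1 m j a))
              * (y.1 i l t * (deriv γ 0).1 i j t) := by
          rw [Finset.sum_mul, Finset.mul_sum]
          exact Finset.sum_congr rfl fun l _ => by ring
        rw [hstep2, ← Finset.sum_sub_distrib]
        exact Finset.sum_congr rfl fun l _ => by ring
      have hreorg : ∑ j, y.2 j * ∑ t, ctr (fun e => A e - phi y e)
          (fun l => y.1 l j) i t * (deriv γ 0).1 i j t
          = ∑ j, ∑ l, (P l j - y.2 l * y.2 j
              * ∏ m ∈ Finset.univ.erase i, (∑ a, y.1 m l a * y.1 m j a))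
            * ∑ t, y.1 i l t * (deriv γ 0).1 i j t := by
        refine Finset.sum_congr rfl fun j _ => ?_
        rw [Finset.mul_sum, Finset.sum_congr rfl fun t _ => hterm j t,
          Finset.sum_comm]
        exact Finset.sum_congr rfl fun l _ => (Finset.mul_sum _ _ _).symm
      rw [hreorg]
      -- symmetric times skew vanishes
      have hSsym : ∀ l j : Fin r, (P l j - y.2 l * y.2 j
          * ∏ m ∈ Finset.univ.erase i, (∑ a, y.1 m l a * y.1 m j a))
          = (P j l - y.2 j * y.2 l
            * ∏ m ∈ Finset.univ.erase i, (∑ a, y.1 m j a * y.1 m l a)) := by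
        intro l j
        have h1' : P j l = P l j := hPsym.apply l j
        have hG : (∏ m ∈ Finset.univ.erase i, (∑ a, y.1 m j a * y.1 m l a))
            = ∏ m ∈ Finset.univ.erase i, (∑ a, y.1 m l a * y.1 m j a) := by
          refine Finset.prod_congr rfl fun m _ => ?_
          exact Finset.sum_congr rfl fun a _ => mul_comm _ _
        rw [h1', hG]
        ring
      have hfinal : ∑ j, ∑ l, (P l j - y.2 l * y.2 j
          * ∏ m ∈ Finset.univ.erase i, (∑ a, y.1 m l a * y.1 m j a))
          * ∑ t, y.1 i l t * (deriv γ 0).1 i j t = 0 := by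
        have hflip : ∑ j, ∑ l, (P l j - y.2 l * y.2 j
            * ∏ m ∈ Finset.univ.erase i, (∑ a, y.1 m l a * y.1 m j a))
            * ∑ t, y.1 i l t * (deriv γ 0).1 i j t
            = ∑ l, ∑ j, (P l j - y.2 l * y.2 j
              * ∏ m ∈ Finset.univ.erase i, (∑ a, y.1 m l a * y.1 m j a))
              * ∑ t, y.1 i l t * (deriv γ 0).1 i j t := Finset.sum_comm
        have hneg : ∑ l, ∑ j, (P l j - y.2 l * y.2 j
            * ∏ m ∈ Finset.univ.erase i, (∑ a, y.1 m l a * y.1 m j a))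
            * ∑ t, y.1 i l t * (deriv γ 0).1 i j t
            = -∑ l, ∑ j, (P j l - y.2 j * y.2 l
              * ∏ m ∈ Finset.univ.erase i, (∑ a, y.1 m j a * y.1 m l a))
              * ∑ t, y.1 i j t * (deriv γ 0).1 i l t := by
          rw [← Finset.sum_neg_distrib]
          refine Finset.sum_congr rfl fun l _ => ?_
          rw [← Finset.sum_neg_distrib]
          refine Finset.sum_congr rfl fun j _ => ?_
          rw [hSsym l j, hskew i hcase l j]
          ring
        have := hflip.trans hneg
        linarith [this]
      exact hfinal
    · -- oblique factor
      push_neg at hcase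
      refine Finset.sum_eq_zero fun j _ => ?_
      have hterm : ∀ t : Fin (n i),
          y.2 j * (ctr (fun e => A e - phi y e) (fun l => y.1 l j) i t
            * (deriv γ 0).1 i j t)
          = (p j - y.2 j * y.2 j) * (y.1 i j t * (deriv γ 0).1 i j t) := by
        intro t
        have hA := hpspec i hcase j t
        have hphi := ctr_phi_orth hk s hs1 y hfeas j i hcase t
        have hsub := ctr_sub A (phi y) (fun l => y.1 l j) i t
        rw [hsub, hphi]
        linear_combination ((deriv γ 0).1 i j t) * hA
      rw [Finset.mul_sum, Finset.sum_congr rfl fun t _ => hterm t,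
        ← Finset.mul_sum, hunit i j, mul_zero]

end POT
end
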